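/- arXiv:1904.09841 — 8 statements merged into one kernel-verified Lean document; each statement's English description precedes it below -/
import Mathlib

section
/- Let A ∈ ℝ^{n×n}, W ∈ {0,1}^{n×n}, and let ‖·‖_* be an entrywise matrix norm. Suppose there is a probability distribution over finitely many labeled partitions of [n]×[n], where each partition consists of at most r combinatorial rectangles each labeled 0 or 1, such that: (1) for every (i,j) with W_{i,j} = 1, the probability that (i,j) lies in a rectangle labeled 1 is at least 1 − ε₁, and (2) for every (i,j) with W_{i,j} = 0, the probability that (i,j) lies in a rectangle labeled 0 is at least 1 − ε₂. Let OPT = min over matrices L̂ of rank at most k of ‖(A − L̂) ∘ W‖_*, and let L_opt be a matrix of rank at most k achieving OPT. Then for every k' ≥ k·r and every matrix L satisfying ‖A ∘ W − L‖_* ≤ (min over matrices of rank at most k' L̂ of ‖A ∘ W − L̂‖_*) + Δ for some Δ ≥ 0 and with rank(L) ≤ k', it holds that ‖(A − L) ∘ W‖_* ≤ OPT + ε₁·‖A ∘ W‖_* + ε₂·‖L_opt ∘ (1 − W)‖_* + Δ. -/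
/-! Mask `Lopt` by the labels of a random partition. Each masked matrix is a sum of at most `r`
rectangular restrictions of `Lopt`, so it has rank at most `k r ≤ k'`. Entrywise, its expected
error against `A ∘ W` is at most `‖(A - Lopt) ∘ W‖ + ε₁ ‖A ∘ W‖ + ε₂ ‖Lopt ∘ (1 - W)‖`, since a
cell with `W = 1` is mislabelled with probability at most `ε₁` and one with `W = 0` with
probability at most `ε₂`. Some partition beats the average, so `‖A ∘ W - L‖` is within `Δ` of
that bound, and masking by `W` only decreases the error of `L`. -/

open Matrix BigOperators

/-- Entrywise matrix norm induced by `g : ℝ≥0 → ℝ≥0` (modeled on all of `ℝ`):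
`‖M‖_* = ∑_{i,j} g |M_{i,j}|`. -/
noncomputable def enorm {n p : ℕ} (g : ℝ → ℝ) (M : Matrix (Fin n) (Fin p) ℝ) : ℝ :=
  ∑ i, ∑ j, g |M i j|

/-- The entrywise complement `1 - W` of a binary matrix `W`. -/
def oneSub {n p : ℕ} (W : Matrix (Fin n) (Fin p) ℝ) : Matrix (Fin n) (Fin p) ℝ :=
  Matrix.of fun i j => 1 - W i j

namespace Matrix

variable {m n K : Type*} [Fintype n] [Field K]

theorem rank_add_le (A B : Matrix m n K) : (A + B).rank ≤ A.rank + B.rank := by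
  have hrange : LinearMap.range (A + B).mulVecLin ≤
      LinearMap.range A.mulVecLin ⊔ LinearMap.range B.mulVecLin := by
    rintro _ ⟨v, rfl⟩
    rw [mulVecLin_add]
    exact Submodule.add_mem_sup ⟨v, rfl⟩ ⟨v, rfl⟩
  exact (Submodule.finrank_mono hrange).trans
    (Submodule.finrank_add_le_finrank_add_finrank _ _)

theorem rank_sum_le {α : Type*} (s : Finset α) (A : α → Matrix m n K) :
    (∑ c ∈ s, A c).rank ≤ ∑ c ∈ s, (A c).rank := by
  classical
  induction s using Finset.induction_on with
  | empty => simp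
  | insert c s hc ih =>
    rw [Finset.sum_insert hc, Finset.sum_insert hc]
    exact (rank_add_le _ _).trans (by gcongr)

/-- Restricting to a combinatorial rectangle `S × T` multiplies by two diagonal projections. -/
theorem rank_of_ite_le_of_rectangle [Fintype m] (M : Matrix m n K)
    (p : m → n → Prop) [∀ i j, Decidable (p i j)] (S : Set m) (T : Set n)
    (hp : ∀ i j, p i j ↔ i ∈ S ∧ j ∈ T) :
    (of fun i j => if p i j then M i j else 0).rank ≤ M.rank := by
  classical
  have hproj : (of fun i j => if p i j then M i j else 0) =
      diagonal (fun i => if i ∈ S then (1 : K) else 0) * M *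
        diagonal (fun j => if j ∈ T then (1 : K) else 0) := by
    ext i j
    rw [mul_diagonal, diagonal_mul]
    by_cases hi : i ∈ S <;> by_cases hj : j ∈ T <;> simp [hi, hj, hp i j]
  rw [hproj]
  exact (rank_mul_le_left _ _).trans (rank_mul_le_right _ _)

def labelMask {α κ : Type*} [Zero α] (part : m × n → κ) (lab : κ → Bool) (M : Matrix m n α) :
    Matrix m n α :=
  of fun i j => if lab (part (i, j)) then M i j else 0

theorem rank_labelMask_le [Fintype m] {κ : Type*} [Fintype κ] (part : m × n → κ)
    (lab : κ → Bool) (hpart : ∀ c, ∃ (S : Set m) (T : Set n),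
      ∀ i j, part (i, j) = c ↔ i ∈ S ∧ j ∈ T) (M : Matrix m n K) :
    (labelMask part lab M).rank ≤ Fintype.card κ * M.rank := by
  classical
  have hdecomp : labelMask part lab M = ∑ c ∈ Finset.univ.filter (lab · = true),
      of fun i j => if part (i, j) = c then M i j else 0 := by
    ext i j
    simp [labelMask, sum_apply]
  calc (labelMask part lab M).rank
      ≤ ∑ c ∈ Finset.univ.filter (lab · = true),
          (of fun i j => if part (i, j) = c then M i j else 0).rank := by
        rw [hdecomp]; exact rank_sum_le _ _
    _ ≤ ∑ _c ∈ Finset.univ.filter (lab · = true), M.rank := by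
        refine Finset.sum_le_sum fun c _ => ?_
        obtain ⟨S, T, hST⟩ := hpart c
        exact rank_of_ite_le_of_rectangle M _ S T hST
    _ ≤ Fintype.card κ * M.rank := by
        rw [Finset.sum_const, smul_eq_mul]
        gcongr
        exact Finset.card_filter_le _ _

end Matrix

theorem Finset.exists_le_sum_mul_of_sum_eq_one {ι : Type*} [Fintype ι] (w v : ι → ℝ)
    (hw : ∀ z, 0 ≤ w z) (hsum : ∑ z, w z = 1) : ∃ z, v z ≤ ∑ z, w z * v z := by
  have hpos : 0 < ∑ z, w z := hsum ▸ one_pos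
  have hne : (Finset.univ : Finset ι).Nonempty :=
    Finset.nonempty_of_sum_ne_zero hpos.ne'
  obtain ⟨z, -, hz⟩ := Finset.exists_mem_eq_inf' hne v
  refine ⟨z, ?_⟩
  have hinf := Finset.inf_le_centerMass (f := v) (fun z _ => hw z) hpos
  rwa [Finset.centerMass_eq_of_sum_1 _ _ hsum, hz] at hinf

section EntrywiseNorm

variable {n p : ℕ} (g : ℝ → ℝ) (hg0 : g 0 = 0) (hg_nonneg : ∀ x : ℝ, 0 ≤ x → 0 ≤ g x)
include hg_nonneg

theorem enorm_nonneg_of_nonneg (M : Matrix (Fin n) (Fin p) ℝ) : 0 ≤ enorm g M :=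
  Finset.sum_nonneg fun _ _ => Finset.sum_nonneg fun _ _ => hg_nonneg _ (abs_nonneg _)

include hg0

theorem enorm_hadamard_sub_le_of_binary (A L W : Matrix (Fin n) (Fin p) ℝ)
    (hW : ∀ i j, W i j = 0 ∨ W i j = 1) :
    enorm g ((A - L) ⊙ W) ≤ enorm g (A ⊙ W - L) := by
  refine Finset.sum_le_sum fun i _ => Finset.sum_le_sum fun j _ => ?_
  rcases hW i j with hWij | hWij
  · simpa [hWij, hg0] using hg_nonneg _ (abs_nonneg _)
  · simp [hWij]

/-- On a cell with `W = 1` the label is wrong with probability `q ≤ ε₁`, costing at most `g |a|`;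
on a cell with `W = 0` it is wrong with probability `p ≤ ε₂`, costing `g |l|`. -/
theorem mul_add_mul_le_of_binary {a l b p q ε₁ ε₂ : ℝ} (hb : b = 0 ∨ b = 1) (hq : 0 ≤ q)
    (hpq : p + q = 1) (h1 : b = 1 → 1 - ε₁ ≤ p) (h0 : b = 0 → 1 - ε₂ ≤ q) :
    p * g |a * b - l| + q * g |a * b| ≤
      g |(a - l) * b| + ε₁ * g |a * b| + ε₂ * g |l * (1 - b)| := by
  rcases hb with rfl | rfl
  · have := hg_nonneg |l| (abs_nonneg l)
    simp only [mul_zero, zero_sub, abs_neg, abs_zero, hg0, sub_zero, mul_one]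
    nlinarith [h0 rfl]
  · have := hg_nonneg |a - l| (abs_nonneg _)
    have := hg_nonneg |a| (abs_nonneg _)
    simp only [mul_one, sub_self, mul_zero, abs_zero, hg0, add_zero]
    nlinarith [h1 rfl]

theorem sum_mul_enorm_sub_labelMask_le {ι κ : Type*} [Fintype ι]
    (A W L : Matrix (Fin n) (Fin p) ℝ) (hW : ∀ i j, W i j = 0 ∨ W i j = 1) (ε₁ ε₂ : ℝ)
    (w : ι → ℝ) (hw_nonneg : ∀ z, 0 ≤ w z) (hw_sum : ∑ z, w z = 1)
    (part : ι → Fin n × Fin p → κ) (lab : ι → κ → Bool)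
    (h_cover1 : ∀ i j, W i j = 1 →
      1 - ε₁ ≤ ∑ z ∈ Finset.univ.filter fun z => lab z (part z (i, j)) = true, w z)
    (h_cover0 : ∀ i j, W i j = 0 →
      1 - ε₂ ≤ ∑ z ∈ Finset.univ.filter fun z => lab z (part z (i, j)) = false, w z) :
    ∑ z, w z * enorm g (A ⊙ W - labelMask (part z) (lab z) L) ≤
      enorm g ((A - L) ⊙ W) + ε₁ * enorm g (A ⊙ W) + ε₂ * enorm g (L ⊙ oneSub W) := by
  have hentry : ∀ i j, ∑ z, w z * g |(A ⊙ W - labelMask (part z) (lab z) L) i j| =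
      (∑ z ∈ Finset.univ.filter fun z => lab z (part z (i, j)) = true, w z) *
          g |A i j * W i j - L i j| +
        (∑ z ∈ Finset.univ.filter fun z => lab z (part z (i, j)) = false, w z) *
          g |A i j * W i j| := by
    intro i j
    simp only [Matrix.sub_apply, hadamard_apply, labelMask, of_apply, apply_ite, sub_zero,
      Finset.sum_ite, Finset.sum_mul, Bool.not_eq_true]
  have hswap : ∑ z, w z * enorm g (A ⊙ W - labelMask (part z) (lab z) L) =
      ∑ i, ∑ j, ∑ z, w z * g |(A ⊙ W - labelMask (part z) (lab z) L) i j| := by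
    simp only [_root_.enorm, Finset.mul_sum]
    rw [Finset.sum_comm]
    exact Finset.sum_congr rfl fun _ _ => Finset.sum_comm
  rw [hswap]
  simp only [_root_.enorm, Finset.mul_sum, ← Finset.sum_add_distrib, hentry]
  refine Finset.sum_le_sum fun i _ => Finset.sum_le_sum fun j _ => ?_
  have hsplit := Finset.sum_filter_add_sum_filter_not Finset.univ
    (fun z => lab z (part z (i, j)) = true) w
  simp only [Bool.not_eq_true, hw_sum] at hsplit
  simp only [hadamard_apply, Matrix.sub_apply, oneSub, of_apply]
  exact mul_add_mul_le_of_binary g hg0 hg_nonneg (hW i j)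
    (Finset.sum_nonneg fun z _ => hw_nonneg z) hsplit (h_cover1 i j) (h_cover0 i j)

end EntrywiseNorm

theorem stmt0_general
    {n k k' r : ℕ} {ι : Type} [Fintype ι]
    (A W : Matrix (Fin n) (Fin n) ℝ)
    (hWbin : ∀ i j, W i j = 0 ∨ W i j = 1)
    (g : ℝ → ℝ) (hg0 : g 0 = 0)
    (hg_nonneg : ∀ x : ℝ, 0 ≤ x → 0 ≤ g x)
    (ε₁ ε₂ Δ : ℝ)
    -- a probability distribution over finitely many labeled partitions,
    -- each consisting of at most `r` rectangles labeled by `lab`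
    (w : ι → ℝ) (hw_nonneg : ∀ z, 0 ≤ w z) (hw_sum : ∑ z, w z = 1)
    (part : ι → Fin n × Fin n → Fin r)
    (lab : ι → Fin r → Bool)
    (h_rect : ∀ z c, ∃ S T : Set (Fin n),
      ∀ i j, part z (i, j) = c ↔ (i ∈ S ∧ j ∈ T))
    (h_cover1 : ∀ i j, W i j = 1 →
      1 - ε₁ ≤ ∑ z ∈ Finset.univ.filter fun z => lab z (part z (i, j)) = true, w z)
    (h_cover0 : ∀ i j, W i j = 0 →
      1 - ε₂ ≤ ∑ z ∈ Finset.univ.filter fun z => lab z (part z (i, j)) = false, w z)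
    -- `Lopt` achieves `OPT`, the min over rank-at-most-`k` matrices
    (Lopt : Matrix (Fin n) (Fin n) ℝ) (hLopt_rank : Lopt.rank ≤ k)
    (hk' : k * r ≤ k')
    (L : Matrix (Fin n) (Fin n) ℝ)
    (hL_near : enorm g (Matrix.hadamard A W - L) ≤
      sInf {x : ℝ | ∃ M : Matrix (Fin n) (Fin n) ℝ, M.rank ≤ k' ∧
        x = enorm g (Matrix.hadamard A W - M)} + Δ) :
    enorm g (Matrix.hadamard (A - L) W) ≤
      enorm g (Matrix.hadamard (A - Lopt) W)
        + ε₁ * enorm g (Matrix.hadamard A W)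
        + ε₂ * enorm g (Matrix.hadamard Lopt (oneSub W)) + Δ := by
  obtain ⟨z₀, hz₀⟩ := Finset.exists_le_sum_mul_of_sum_eq_one w
    (fun z => enorm g (A ⊙ W - labelMask (part z) (lab z) Lopt)) hw_nonneg hw_sum
  have hrank : (labelMask (part z₀) (lab z₀) Lopt).rank ≤ k' :=
    calc _ ≤ Fintype.card (Fin r) * Lopt.rank := rank_labelMask_le _ _ (h_rect z₀) Lopt
      _ ≤ k * r := by rw [Fintype.card_fin, mul_comm]; gcongr
      _ ≤ k' := hk'
  have hinf : sInf {x : ℝ | ∃ M : Matrix (Fin n) (Fin n) ℝ, M.rank ≤ k' ∧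
      x = enorm g (A ⊙ W - M)} ≤ enorm g (A ⊙ W - labelMask (part z₀) (lab z₀) Lopt) :=
    csInf_le ⟨0, by rintro _ ⟨M, -, rfl⟩; exact enorm_nonneg_of_nonneg g hg_nonneg _⟩
      ⟨_, hrank, rfl⟩
  calc enorm g ((A - L) ⊙ W) ≤ enorm g (A ⊙ W - L) :=
        enorm_hadamard_sub_le_of_binary g hg0 hg_nonneg A L W hWbin
    _ ≤ ∑ z, w z * enorm g (A ⊙ W - labelMask (part z) (lab z) Lopt) + Δ := by linarith
    _ ≤ _ := by
        gcongr
        exact sum_mul_enorm_sub_labelMask_le g hg0 hg_nonneg A W Lopt hWbin ε₁ ε₂ w hw_nonneg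
          hw_sum part lab h_cover1 h_cover0

/-- bicriteria masked low-rank approximation from a distribution over
labeled rectangle partitions of `[n] × [n]`. -/
theorem stmt0
    {n k k' r : ℕ} {ι : Type} [Fintype ι]
    (A W : Matrix (Fin n) (Fin n) ℝ)
    (hWbin : ∀ i j, W i j = 0 ∨ W i j = 1)
    (g : ℝ → ℝ) (hg0 : g 0 = 0)
    (hg_nonneg : ∀ x : ℝ, 0 ≤ x → 0 ≤ g x)
    (hg_mono : ∀ x y : ℝ, 0 ≤ x → x ≤ y → g x ≤ g y)
    (ε₁ ε₂ Δ : ℝ) (hΔ : 0 ≤ Δ)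
    -- a probability distribution over finitely many labeled partitions,
    -- each consisting of at most `r` rectangles labeled by `lab`
    (w : ι → ℝ) (hw_nonneg : ∀ z, 0 ≤ w z) (hw_sum : ∑ z, w z = 1)
    (part : ι → Fin n × Fin n → Fin r)
    (lab : ι → Fin r → Bool)
    (h_rect : ∀ z c, ∃ S T : Set (Fin n),
      ∀ i j, part z (i, j) = c ↔ (i ∈ S ∧ j ∈ T))
    (h_cover1 : ∀ i j, W i j = 1 →
      1 - ε₁ ≤ ∑ z ∈ Finset.univ.filter fun z => lab z (part z (i, j)) = true, w z)
    (h_cover0 : ∀ i j, W i j = 0 →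
      1 - ε₂ ≤ ∑ z ∈ Finset.univ.filter fun z => lab z (part z (i, j)) = false, w z)
    -- `Lopt` achieves `OPT`, the min over rank-at-most-`k` matrices
    (Lopt : Matrix (Fin n) (Fin n) ℝ) (hLopt_rank : Lopt.rank ≤ k)
    (hLopt_opt : ∀ M : Matrix (Fin n) (Fin n) ℝ, M.rank ≤ k →
      enorm g (Matrix.hadamard (A - Lopt) W) ≤ enorm g (Matrix.hadamard (A - M) W))
    (hk' : k * r ≤ k')
    (L : Matrix (Fin n) (Fin n) ℝ) (hL_rank : L.rank ≤ k')
    (hL_near : enorm g (Matrix.hadamard A W - L) ≤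
      sInf {x : ℝ | ∃ M : Matrix (Fin n) (Fin n) ℝ, M.rank ≤ k' ∧
        x = enorm g (Matrix.hadamard A W - M)} + Δ) :
    enorm g (Matrix.hadamard (A - L) W) ≤
      enorm g (Matrix.hadamard (A - Lopt) W)
        + ε₁ * enorm g (Matrix.hadamard A W)
        + ε₂ * enorm g (Matrix.hadamard Lopt (oneSub W)) + Δ :=
  stmt0_general A W hWbin g hg0 hg_nonneg ε₁ ε₂ Δ w hw_nonneg hw_sum part lab h_rect h_cover1
    h_cover0 Lopt hLopt_rank hk' L hL_near
end

section
/- Masked tensor low-rank approximation from multiparty partitions (order 3): Let A and W be order-3 tensors indexed by [n]×[n]×[n], with A real-valued and W binary, and let ‖·‖_* be an entrywise norm on tensors. Suppose there is a probability distribution over finitely many labeled partitions of [n]×[n]×[n], where each partition consists of at most r combinatorial boxes S×T×U each labeled 0 or 1, such that every entry (i,j,l) with W_{i,j,l} = 1 lies in a box labeled 1 with probability at least 1 − ε₁, and every entry with W_{i,j,l} = 0 lies in a box labeled 0 with probability at least 1 − ε₂. Let OPT = infimum over tensors L̂ of rank at most k of ‖(A − L̂) ∘ W‖_*, and for γ >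 0 let L_γ be a tensor of rank at most k with ‖(A − L_γ) ∘ W‖_* ≤ OPT + γ. Then for every k' ≥ k·r and every tensor L of rank at most k' satisfying ‖A ∘ W − L‖_* ≤ (infimum over tensors L̂ of rank at most k' of ‖A ∘ W − L̂‖_*) + ε₃·‖A ∘ W‖_*, it holds that ‖(A − L) ∘ W‖_* ≤ OPT + (ε₁ + ε₃)·‖A ∘ W‖_* + ε₂·‖L_γ ∘ (1 − W)‖_* + γ. -/
open BigOperators

/-- Entrywise norm of an order-3 tensor induced by `g`. -/
noncomputable def tnorm {n : ℕ} (g : ℝ → ℝ) (T : Fin n → Fin n → Fin n → ℝ) : ℝ :=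
  ∑ i, ∑ j, ∑ m, g |T i j m|

/-- Entrywise (Hadamard) product of order-3 tensors. -/
def thad {n : ℕ} (T S : Fin n → Fin n → Fin n → ℝ) : Fin n → Fin n → Fin n → ℝ :=
  fun i j m => T i j m * S i j m

/-- The entrywise complement `1 - W` of a binary tensor `W`. -/
def tOneSub {n : ℕ} (W : Fin n → Fin n → Fin n → ℝ) : Fin n → Fin n → Fin n → ℝ :=
  fun i j m => 1 - W i j m

/-- An order-3 tensor has (CP) rank at most `k`. -/
def TensorRankLE {n : ℕ} (k : ℕ) (T : Fin n → Fin n → Fin n → ℝ) : Prop :=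
  ∃ u v w : Fin k → Fin n → ℝ, ∀ i j m, T i j m = ∑ l, u l i * v l j * w l m

/-!
Restricting the rank-`k` tensor `Lγ` to the boxes labeled `1` of one partition gives a sum of at
most `r` box restrictions of `Lγ`, hence a tensor of rank at most `k * r ≤ k'`. Averaging its error
against `A ∘ W` over the distribution of partitions costs, at each cell, the error of `Lγ` plus
`ε₁ · g |A|` on the support of `W` and `ε₂ · g |Lγ|` off it. Since `L` is a near-optimal rank-`k'`
approximation of `A ∘ W`, it does at least as well up to `ε₃ ‖A ∘ W‖`, and the masked error of `L`
is at most its error against `A ∘ W`.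
-/

open Finset Set

variable {n : ℕ}

def IsBox (P : Fin n → Fin n → Fin n → Prop) : Prop :=
  ∃ S T U : Set (Fin n), ∀ i j m, P i j m ↔ i ∈ S ∧ j ∈ T ∧ m ∈ U

def maskByLabel {r : ℕ} (part : Fin n × Fin n × Fin n → Fin r) (lab : Fin r → Bool)
    (X : Fin n → Fin n → Fin n → ℝ) : Fin n → Fin n → Fin n → ℝ :=
  fun i j m => if lab (part (i, j, m)) then X i j m else 0

namespace TensorRankLE

theorem zero (k : ℕ) : TensorRankLE k (0 : Fin n → Fin n → Fin n → ℝ) :=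
  ⟨0, 0, 0, by simp⟩

theorem add {a b : ℕ} {X Y : Fin n → Fin n → Fin n → ℝ}
    (hX : TensorRankLE a X) (hY : TensorRankLE b Y) : TensorRankLE (a + b) (X + Y) := by
  obtain ⟨u, v, w, hX⟩ := hX
  obtain ⟨u', v', w', hY⟩ := hY
  exact ⟨Fin.append u u', Fin.append v v', Fin.append w w', fun i j m => by
    simp [Fin.sum_univ_add, hX, hY]⟩

theorem mono {a b : ℕ} (hab : a ≤ b) {X : Fin n → Fin n → Fin n → ℝ}
    (hX : TensorRankLE a X) : TensorRankLE b X := by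
  obtain ⟨d, rfl⟩ := Nat.exists_eq_add_of_le hab
  simpa using hX.add (zero d)

theorem sum {ι : Type*} {k : ℕ} (s : Finset ι) {X : ι → Fin n → Fin n → Fin n → ℝ}
    (hX : ∀ c ∈ s, TensorRankLE k (X c)) : TensorRankLE (k * s.card) (∑ c ∈ s, X c) := by
  induction s using Finset.cons_induction with
  | empty => simpa using zero 0
  | cons c s hc ih =>
    rw [sum_cons, card_cons, Nat.mul_succ, add_comm (X c)]
    exact (ih fun c' hc' => hX c' (mem_cons_of_mem hc')).add (hX c (mem_cons_self c s))

theorem restrict_box {k : ℕ} {X : Fin n → Fin n → Fin n → ℝ}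
    {P : Fin n → Fin n → Fin n → Prop} [∀ i j m, Decidable (P i j m)] (hP : IsBox P)
    (hX : TensorRankLE k X) :
    TensorRankLE k (fun i j m => if P i j m then X i j m else 0) := by
  classical
  obtain ⟨S, T, U, hP⟩ := hP
  obtain ⟨u, v, w, hX⟩ := hX
  refine ⟨fun l => S.indicator (u l), fun l => T.indicator (v l), fun l => U.indicator (w l),
    fun i j m => ?_⟩
  simp only [hP, hX, Set.indicator_apply]
  split_ifs <;> simp_all

theorem maskByLabel {k r : ℕ} {part : Fin n × Fin n × Fin n → Fin r} {lab : Fin r → Bool}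
    (hpart : ∀ c, IsBox fun i j m => part (i, j, m) = c) {X : Fin n → Fin n → Fin n → ℝ}
    (hX : TensorRankLE k X) : TensorRankLE (k * r) (_root_.maskByLabel part lab X) := by
  have hsum : _root_.maskByLabel part lab X = ∑ c ∈ univ.filter (lab · = true),
      fun i j m => if part (i, j, m) = c then X i j m else 0 := by
    ext i j m
    simp [_root_.maskByLabel, Finset.sum_apply]
  rw [hsum]
  refine (sum _ fun c _ => restrict_box (hpart c) hX).mono (Nat.mul_le_mul_left k ?_)
  simpa using card_filter_le univ (lab · = true)

end TensorRankLE

theorem csInf_le_sum_mul {ι : Type*} [Fintype ι] {s : Set ℝ} (hs : BddBelow s) {w : ι → ℝ}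
    (hw0 : ∀ z, 0 ≤ w z) (hw1 : ∑ z, w z = 1) {x : ι → ℝ} (hx : ∀ z, x z ∈ s) :
    sInf s ≤ ∑ z, w z * x z :=
  calc sInf s = ∑ z, w z * sInf s := by rw [← sum_mul, hw1, one_mul]
    _ ≤ ∑ z, w z * x z :=
      sum_le_sum fun z _ => mul_le_mul_of_nonneg_left (csInf_le hs (hx z)) (hw0 z)

section tnorm

variable {g : ℝ → ℝ}

theorem apply_abs_nonneg (hg : MonotoneOn g (Ici 0)) (hg0 : g 0 = 0) (t : ℝ) : 0 ≤ g |t| :=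
  hg0 ▸ hg self_mem_Ici (mem_Ici.2 (abs_nonneg t)) (abs_nonneg t)

theorem tnorm_nonneg (hg : MonotoneOn g (Ici 0)) (hg0 : g 0 = 0)
    (X : Fin n → Fin n → Fin n → ℝ) : 0 ≤ tnorm g X :=
  sum_nonneg fun _ _ => sum_nonneg fun _ _ => sum_nonneg fun _ _ => apply_abs_nonneg hg hg0 _

theorem tnorm_mono (hg : MonotoneOn g (Ici 0)) {X Y : Fin n → Fin n → Fin n → ℝ}
    (h : ∀ i j m, |X i j m| ≤ |Y i j m|) : tnorm g X ≤ tnorm g Y :=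
  sum_le_sum fun i _ => sum_le_sum fun j _ => sum_le_sum fun m _ =>
    hg (mem_Ici.2 (abs_nonneg _)) (mem_Ici.2 (abs_nonneg _)) (h i j m)

theorem tnorm_thad_sub_le (hg : MonotoneOn g (Ici 0)) {W : Fin n → Fin n → Fin n → ℝ}
    (hW : ∀ i j m, W i j m = 0 ∨ W i j m = 1) (A L : Fin n → Fin n → Fin n → ℝ) :
    tnorm g (thad (A - L) W) ≤ tnorm g (thad A W - L) :=
  tnorm_mono hg fun i j m => by
    rcases hW i j m with h | h <;> simp [thad, h]

theorem sum_mul_tnorm {ι : Type*} [Fintype ι] (w : ι → ℝ) (X : ι → Fin n → Fin n → Fin n → ℝ) :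
    ∑ z, w z * tnorm g (X z) = ∑ i, ∑ j, ∑ m, ∑ z, w z * g |X z i j m| := by
  simp only [tnorm, mul_sum]
  rw [sum_comm]
  refine sum_congr rfl fun i _ => ?_
  rw [sum_comm]
  exact sum_congr rfl fun j _ => sum_comm

theorem average_cell_error_le (hg : MonotoneOn g (Ici 0)) (hg0 : g 0 = 0)
    {a l x p q ε₁ ε₂ : ℝ} (hx : x = 0 ∨ x = 1) (hq : 0 ≤ q) (hpq : p + q = 1)
    (h₁ : x = 1 → 1 - ε₁ ≤ p) (h₀ : x = 0 → 1 - ε₂ ≤ q) :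
    p * g |a * x - l| + q * g |a * x| ≤
      g |(a - l) * x| + ε₁ * g |a * x| + ε₂ * g |l * (1 - x)| := by
  have hg_nonneg := apply_abs_nonneg hg hg0
  rcases hx with rfl | rfl
  · simp only [mul_zero, zero_sub, sub_zero, abs_neg, abs_zero, hg0, mul_one]
    nlinarith [hg_nonneg l, h₀ rfl]
  · simp only [mul_one, sub_self, mul_zero, abs_zero, hg0]
    nlinarith [hg_nonneg (a - l), hg_nonneg a, h₁ rfl]

theorem sum_mul_tnorm_sub_maskByLabel_le (hg : MonotoneOn g (Ici 0))
    (hg0 : g 0 = 0) {W : Fin n → Fin n → Fin n → ℝ} (hW : ∀ i j m, W i j m = 0 ∨ W i j m = 1)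
    {ι : Type*} [Fintype ι] {w : ι → ℝ} (hw0 : ∀ z, 0 ≤ w z) (hw1 : ∑ z, w z = 1)
    {r : ℕ} {part : ι → Fin n × Fin n × Fin n → Fin r} {lab : ι → Fin r → Bool} {ε₁ ε₂ : ℝ}
    (h₁ : ∀ i j m, W i j m = 1 →
      1 - ε₁ ≤ ∑ z ∈ univ.filter fun z => lab z (part z (i, j, m)) = true, w z)
    (h₀ : ∀ i j m, W i j m = 0 →
      1 - ε₂ ≤ ∑ z ∈ univ.filter fun z => lab z (part z (i, j, m)) = false, w z)
    (A L : Fin n → Fin n → Fin n → ℝ) :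
    ∑ z, w z * tnorm g (thad A W - maskByLabel (part z) (lab z) L) ≤
      tnorm g (thad (A - L) W) + ε₁ * tnorm g (thad A W) + ε₂ * tnorm g (thad L (tOneSub W)) := by
  have hrhs : tnorm g (thad (A - L) W) + ε₁ * tnorm g (thad A W)
      + ε₂ * tnorm g (thad L (tOneSub W)) = ∑ i, ∑ j, ∑ m, (g |(A i j m - L i j m) * W i j m|
        + ε₁ * g |A i j m * W i j m| + ε₂ * g |L i j m * (1 - W i j m)|) := by
    simp only [tnorm, thad, tOneSub, Pi.sub_apply, sum_add_distrib, mul_sum]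
  rw [sum_mul_tnorm, hrhs]
  gcongr with i _ j _ m _
  set p := ∑ z ∈ univ.filter fun z => lab z (part z (i, j, m)) = true, w z
  set q := ∑ z ∈ univ.filter fun z => lab z (part z (i, j, m)) = false, w z
  have hsplit : ∑ z, w z * g |(thad A W - maskByLabel (part z) (lab z) L) i j m| =
      p * g |A i j m * W i j m - L i j m| + q * g |A i j m * W i j m| := by
    simp only [thad, maskByLabel, Pi.sub_apply, apply_ite, sum_ite, sum_mul, sub_zero, p, q,
      Bool.not_eq_true]
  have hpq : p + q = 1 := by
    rw [← hw1, ← sum_filter_add_sum_filter_not univ fun z => lab z (part z (i, j, m)) = true]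
    simp only [p, q, Bool.not_eq_true]
  rw [hsplit]
  exact average_cell_error_le hg hg0 (hW i j m) (sum_nonneg fun z _ => hw0 z) hpq
    (h₁ i j m) (h₀ i j m)

end tnorm

theorem stmt7_general
    {n k k' r : ℕ} {ι : Type} [Fintype ι]
    (A W : Fin n → Fin n → Fin n → ℝ)
    (hWbin : ∀ i j m, W i j m = 0 ∨ W i j m = 1)
    (g : ℝ → ℝ) (hg0 : g 0 = 0)
    (hg_mono : ∀ x y : ℝ, 0 ≤ x → x ≤ y → g x ≤ g y)
    (ε₁ ε₂ ε₃ γ : ℝ)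
    -- a probability distribution over finitely many labeled box partitions,
    -- each consisting of at most `r` boxes labeled by `lab`
    (w : ι → ℝ) (hw_nonneg : ∀ z, 0 ≤ w z) (hw_sum : ∑ z, w z = 1)
    (part : ι → Fin n × Fin n × Fin n → Fin r)
    (lab : ι → Fin r → Bool)
    (h_box : ∀ z c, ∃ S T U : Set (Fin n),
      ∀ i j m, part z (i, j, m) = c ↔ (i ∈ S ∧ j ∈ T ∧ m ∈ U))
    (h_cover1 : ∀ i j m, W i j m = 1 →
      1 - ε₁ ≤ ∑ z ∈ Finset.univ.filter fun z => lab z (part z (i, j, m)) = true, w z)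
    (h_cover0 : ∀ i j m, W i j m = 0 →
      1 - ε₂ ≤ ∑ z ∈ Finset.univ.filter fun z => lab z (part z (i, j, m)) = false, w z)
    -- `Lγ` is a rank-at-most-`k` tensor achieving `OPT + γ`
    (Lγ : Fin n → Fin n → Fin n → ℝ) (hLγ_rank : TensorRankLE k Lγ)
    (hLγ : tnorm g (thad (A - Lγ) W) ≤
      sInf {x : ℝ | ∃ M : Fin n → Fin n → Fin n → ℝ, TensorRankLE k M ∧
        x = tnorm g (thad (A - M) W)} + γ)
    (hk' : k * r ≤ k')
    (L : Fin n → Fin n → Fin n → ℝ)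
    (hL_near : tnorm g (thad A W - L) ≤
      sInf {x : ℝ | ∃ M : Fin n → Fin n → Fin n → ℝ, TensorRankLE k' M ∧
        x = tnorm g (thad A W - M)} + ε₃ * tnorm g (thad A W)) :
    tnorm g (thad (A - L) W) ≤
      sInf {x : ℝ | ∃ M : Fin n → Fin n → Fin n → ℝ, TensorRankLE k M ∧
        x = tnorm g (thad (A - M) W)}
        + (ε₁ + ε₃) * tnorm g (thad A W)
        + ε₂ * tnorm g (thad Lγ (tOneSub W)) + γ := by
  have hg : MonotoneOn g (Ici 0) := fun x hx y _ hxy => hg_mono x y hx hxy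
  have hbdd : BddBelow {x : ℝ | ∃ M : Fin n → Fin n → Fin n → ℝ, TensorRankLE k' M ∧
      x = tnorm g (thad A W - M)} :=
    ⟨0, by rintro _ ⟨M, -, rfl⟩; exact tnorm_nonneg hg hg0 _⟩
  have hmask : ∀ z, TensorRankLE k' (maskByLabel (part z) (lab z) Lγ) := fun z =>
    (hLγ_rank.maskByLabel (h_box z)).mono hk'
  have hopt := csInf_le_sum_mul hbdd hw_nonneg hw_sum fun z => ⟨_, hmask z, rfl⟩
  have havg := sum_mul_tnorm_sub_maskByLabel_le hg hg0 hWbin hw_nonneg hw_sum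
    h_cover1 h_cover0 A Lγ
  linarith [tnorm_thad_sub_le hg hWbin A L]

/-- masked tensor low-rank approximation from a distribution over
labeled box partitions of `[n] × [n] × [n]`. -/
theorem stmt7
    {n k k' r : ℕ} {ι : Type} [Fintype ι]
    (A W : Fin n → Fin n → Fin n → ℝ)
    (hWbin : ∀ i j m, W i j m = 0 ∨ W i j m = 1)
    (g : ℝ → ℝ) (hg0 : g 0 = 0)
    (hg_nonneg : ∀ x : ℝ, 0 ≤ x → 0 ≤ g x)
    (hg_mono : ∀ x y : ℝ, 0 ≤ x → x ≤ y → g x ≤ g y)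
    (ε₁ ε₂ ε₃ γ : ℝ) (hγ : 0 < γ)
    -- a probability distribution over finitely many labeled box partitions,
    -- each consisting of at most `r` boxes labeled by `lab`
    (w : ι → ℝ) (hw_nonneg : ∀ z, 0 ≤ w z) (hw_sum : ∑ z, w z = 1)
    (part : ι → Fin n × Fin n × Fin n → Fin r)
    (lab : ι → Fin r → Bool)
    (h_box : ∀ z c, ∃ S T U : Set (Fin n),
      ∀ i j m, part z (i, j, m) = c ↔ (i ∈ S ∧ j ∈ T ∧ m ∈ U))
    (h_cover1 : ∀ i j m, W i j m = 1 →
      1 - ε₁ ≤ ∑ z ∈ Finset.univ.filter fun z => lab z (part z (i, j, m)) = true, w z)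
    (h_cover0 : ∀ i j m, W i j m = 0 →
      1 - ε₂ ≤ ∑ z ∈ Finset.univ.filter fun z => lab z (part z (i, j, m)) = false, w z)
    -- `Lγ` is a rank-at-most-`k` tensor achieving `OPT + γ`
    (Lγ : Fin n → Fin n → Fin n → ℝ) (hLγ_rank : TensorRankLE k Lγ)
    (hLγ : tnorm g (thad (A - Lγ) W) ≤
      sInf {x : ℝ | ∃ M : Fin n → Fin n → Fin n → ℝ, TensorRankLE k M ∧
        x = tnorm g (thad (A - M) W)} + γ)
    (hk' : k * r ≤ k')
    (L : Fin n → Fin n → Fin n → ℝ) (hL_rank : TensorRankLE k' L)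
    (hL_near : tnorm g (thad A W - L) ≤
      sInf {x : ℝ | ∃ M : Fin n → Fin n → Fin n → ℝ, TensorRankLE k' M ∧
        x = tnorm g (thad A W - M)} + ε₃ * tnorm g (thad A W)) :
    tnorm g (thad (A - L) W) ≤
      sInf {x : ℝ | ∃ M : Fin n → Fin n → Fin n → ℝ, TensorRankLE k M ∧
        x = tnorm g (thad (A - M) W)}
        + (ε₁ + ε₃) * tnorm g (thad A W)
        + ε₂ * tnorm g (thad Lγ (tOneSub W)) + γ :=
  stmt7_general A W hWbin g hg0 hg_mono ε₁ ε₂ ε₃ γ w hw_nonneg hw_sum part lab h_box h_cover1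
    h_cover0 Lγ hLγ_rank hLγ hk' L hL_near
end

section
/- Masked Boolean low-rank approximation from rectangle covers: Let A, W ∈ {0,1}^{n×n}. Suppose the support {(i,j) : W_{i,j} = 1} is the union of r (possibly overlapping) combinatorial rectangles, each of which is contained in the support of W. Then for every k' ≥ r·k, if U ∈ {0,1}^{n×k'} and V ∈ {0,1}^{k'×n} satisfy ‖A ∘ W − U·V‖₀ ≤ (min over Û ∈ {0,1}^{n×k'}, V̂ ∈ {0,1}^{k'×n} of ‖A ∘ W − Û·V̂‖₀) + Δ for some Δ ≥ 0, then ‖W ∘ (A − U·V)‖₀ ≤ r·OPT + Δ, where OPT = min over Û ∈ {0,1}^{n×k}, V̂ ∈ {0,1}^{k×n} of ‖W ∘ (A − Û·V̂)‖₀. -/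
open BigOperators

/-- Boolean matrix product: `(U·V)_{i,j} = 1` iff `∃ l, U_{i,l} = 1 ∧ V_{l,j} = 1`. -/
def bMul {n k : ℕ} (U : Fin n → Fin k → Bool) (V : Fin k → Fin n → Bool) :
    Fin n → Fin n → Bool :=
  fun i j => decide (∃ l, U i l = true ∧ V l j = true)

/-- Entrywise AND (Hadamard product of Boolean matrices). -/
def bHad {n : ℕ} (M N : Fin n → Fin n → Bool) : Fin n → Fin n → Bool :=
  fun i j => M i j && N i j

/-- `‖M − N‖₀`: the number of entries where the Boolean matrices `M` and `N` differ. -/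
def l0diff {n : ℕ} (M N : Fin n → Fin n → Bool) : ℕ :=
  (Finset.univ.filter fun p : Fin n × Fin n => M p.1 p.2 ≠ N p.1 p.2).card

/-- `‖W ∘ (M − N)‖₀`: the number of entries in the support of `W` where `M` and `N` differ. -/
def l0maskdiff {n : ℕ} (W M N : Fin n → Fin n → Bool) : ℕ :=
  (Finset.univ.filter fun p : Fin n × Fin n =>
    W p.1 p.2 = true ∧ M p.1 p.2 ≠ N p.1 p.2).card


/-!
Restricting the factors of a width-`k` Boolean product `Û·V̂` to the `r` rectangles covering the
support of `W` (row factors to `S c`, column factors to `T c`) gives a width-`r·k` Boolean product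
equal to `W ∘ (Û·V̂)`, whose unmasked error against `A ∘ W` is the masked error of `Û·V̂` against `A`.
Hence the unmasked optimum at width `k'` is at most `OPT`, and since the masked error of `U·V` is at
most its unmasked error against `A ∘ W`, it is at most `OPT + Δ ≤ r·OPT + Δ` when `r ≥ 1`; when
`r = 0` the mask is empty.
-/

lemma l0maskdiff_le_l0diff_bHad {n : ℕ} (W A M : Fin n → Fin n → Bool) :
    l0maskdiff W A M ≤ l0diff (bHad A W) M := by
  refine Finset.card_le_card fun p hp => ?_
  simp only [Finset.mem_filter, Finset.mem_univ, true_and] at hp ⊢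
  simpa [bHad, hp.1] using hp.2

lemma l0diff_bHad_bHad {n : ℕ} (W A M : Fin n → Fin n → Bool) :
    l0diff (bHad A W) (bHad W M) = l0maskdiff W A M := by
  unfold l0diff l0maskdiff
  refine congrArg Finset.card (Finset.filter_congr fun p _ => ?_)
  cases hW : W p.1 p.2 <;> simp [bHad, hW]

lemma l0maskdiff_eq_zero {n : ℕ} {W : Fin n → Fin n → Bool} (hW : ∀ i j, W i j = false)
    (A M : Fin n → Fin n → Bool) : l0maskdiff W A M = 0 := by
  simp [l0maskdiff, hW]

lemma exists_bMul_eq_of_le {n m m' : ℕ} (h : m ≤ m') (U : Fin n → Fin m → Bool)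
    (V : Fin m → Fin n → Bool) :
    ∃ (U' : Fin n → Fin m' → Bool) (V' : Fin m' → Fin n → Bool), bMul U' V' = bMul U V := by
  refine ⟨fun i l => if hl : (l : ℕ) < m then U i ⟨l, hl⟩ else false,
    fun l j => if hl : (l : ℕ) < m then V ⟨l, hl⟩ j else false, ?_⟩
  ext i j
  simp only [bMul, decide_eq_decide]
  constructor
  · rintro ⟨l, hu, hv⟩
    split_ifs at hu hv with hl
    exact ⟨_, hu, hv⟩
  · rintro ⟨l, hu, hv⟩
    exact ⟨Fin.castLE h l, by simpa using hu, by simpa using hv⟩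

lemma exists_bMul_eq_restrict_rectangles {n r k : ℕ} (S T : Fin r → Set (Fin n))
    (U : Fin n → Fin k → Bool) (V : Fin k → Fin n → Bool) :
    ∃ (U' : Fin n → Fin (r * k) → Bool) (V' : Fin (r * k) → Fin n → Bool),
      ∀ i j, (bMul U' V' i j = true ↔ (∃ c, i ∈ S c ∧ j ∈ T c) ∧ bMul U V i j = true) := by
  classical
  refine ⟨fun i l => decide (i ∈ S (finProdFinEquiv.symm l).1) && U i (finProdFinEquiv.symm l).2,
    fun l j => decide (j ∈ T (finProdFinEquiv.symm l).1) && V (finProdFinEquiv.symm l).2 j,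
    fun i j => ?_⟩
  simp only [bMul, Bool.and_eq_true, decide_eq_true_eq]
  constructor
  · rintro ⟨l, ⟨hS, hu⟩, hT, hv⟩
    exact ⟨⟨_, hS, hT⟩, _, hu, hv⟩
  · rintro ⟨⟨c, hS, hT⟩, l, hu, hv⟩
    exact ⟨finProdFinEquiv (c, l), by simp [hS, hT, hu, hv]⟩

lemma exists_bMul_eq_bHad_of_rectangle_cover {n r k k' : ℕ} {W : Fin n → Fin n → Bool}
    {S T : Fin r → Set (Fin n)} (h_cover : ∀ i j, W i j = true ↔ ∃ c, i ∈ S c ∧ j ∈ T c)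
    (hk' : r * k ≤ k') (U : Fin n → Fin k → Bool) (V : Fin k → Fin n → Bool) :
    ∃ (U' : Fin n → Fin k' → Bool) (V' : Fin k' → Fin n → Bool),
      bMul U' V' = bHad W (bMul U V) := by
  obtain ⟨U₁, V₁, hUV₁⟩ := exists_bMul_eq_restrict_rectangles S T U V
  obtain ⟨U', V', hUV'⟩ := exists_bMul_eq_of_le hk' U₁ V₁
  refine ⟨U', V', funext₂ fun i j => ?_⟩
  rw [hUV', Bool.eq_iff_iff, hUV₁, bHad, Bool.and_eq_true, h_cover]

/-- masked Boolean low-rank approximation from rectangle covers. -/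
theorem stmt8
    {n k k' r : ℕ}
    (A W : Fin n → Fin n → Bool)
    (S T : Fin r → Set (Fin n))
    (h_cover : ∀ i j, W i j = true ↔ ∃ c, i ∈ S c ∧ j ∈ T c)
    (hk' : r * k ≤ k') (Δ : ℕ)
    (U : Fin n → Fin k' → Bool) (V : Fin k' → Fin n → Bool)
    (hUV : l0diff (bHad A W) (bMul U V) ≤
      sInf {x : ℕ | ∃ (U' : Fin n → Fin k' → Bool) (V' : Fin k' → Fin n → Bool),
        x = l0diff (bHad A W) (bMul U' V')} + Δ) :
    l0maskdiff W A (bMul U V) ≤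
      r * sInf {x : ℕ | ∃ (U' : Fin n → Fin k → Bool) (V' : Fin k → Fin n → Bool),
        x = l0maskdiff W A (bMul U' V')} + Δ := by
  obtain rfl | hr := r.eq_zero_or_pos
  · have hW : ∀ i j, W i j = false := fun i j =>
      Bool.eq_false_iff.mpr fun h => ((h_cover i j).1 h).elim fun c _ => c.elim0
    exact (l0maskdiff_eq_zero hW A _).trans_le (Nat.zero_le _)
  obtain ⟨Uo, Vo, hopt⟩ := Nat.sInf_mem (s := {x : ℕ | ∃ (U' : Fin n → Fin k → Bool)
    (V' : Fin k → Fin n → Bool), x = l0maskdiff W A (bMul U' V')}) ⟨_, default, default, rfl⟩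
  obtain ⟨U', V', hUV'⟩ := exists_bMul_eq_bHad_of_rectangle_cover h_cover hk' Uo Vo
  calc l0maskdiff W A (bMul U V)
      _ ≤ l0diff (bHad A W) (bMul U V) := l0maskdiff_le_l0diff_bHad W A _
      _ ≤ _ := hUV
      _ ≤ l0maskdiff W A (bMul Uo Vo) + Δ := by
        gcongr
        exact Nat.sInf_le ⟨U', V', by rw [hUV', l0diff_bHad_bHad]⟩
      _ ≤ _ := by
        rw [← hopt]
        gcongr
        exact Nat.le_mul_of_pos_left _ hr
end

section
/- Projection-cost inequality: Let F ∈ ℝ^{m×p}, let k ≥ 1, let ε ∈ (0,1), and set r = ⌈k/ε⌉ with r ≤ m. Suppose U ∈ ℝ^{m×r} has orthonormal columns and minimizes ‖F − UUᵀF‖_F over all m×r matrices with orthonormal columns (equivalently, UUᵀF is a best rank-r approximation of F in Frobenius norm among matrices of the form (orthogonal projection)·F). Then for every Q ∈ ℝ^{p×k} with orthonormal columns, ‖(F − UUᵀF)·QQᵀ‖_F² ≤ (ε/(1−ε)) · min over matrices G of rank at most k of ‖F − G‖_F². -/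
/-!
Diagonalize `F Fᵀ = V diag(μ) Vᵀ` with `μ` antitone and nonnegative, and put `t = μ r` (indices
counted from `0`, so `t` is the `(r + 1)`-st largest eigenvalue). For `W` with orthonormal columns,
`tr (Wᵀ F Fᵀ W) = ∑ μ i c i`, where the leverage scores `c i` of `Vᵀ W` lie in `[0, 1]` and sum
to the number of columns of `W`; this gives Ky Fan's bounds.

Upper bound: `‖F - U Uᵀ F‖² = tr (F Fᵀ) - tr (Uᵀ F Fᵀ U)`, so the optimal `U` captures the top `r`
eigenvalues, and Ky Fan applied to `U` plus one more unit vector orthogonal to it shows that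
`‖Fᵀ v‖² ≤ t ‖v‖²` for `v ⊥ U`. The residual `E = F - U Uᵀ F` maps into that complement, where
`Eᵀ` agrees with `Fᵀ`; hence `‖E q‖² ≤ t ‖q‖²` and `‖E Q Qᵀ‖² = ‖E Q‖² ≤ k t`.

Lower bound: a matrix `G` of rank at most `k` is annihilated by some `W` with at least `m - k`
orthonormal columns, and then `‖F - G‖² ≥ tr (Wᵀ F Fᵀ W) ≥ (r + 1 - k) t`.

Finally `k ≤ ε r` makes `k t ≤ ε / (1 - ε) · (r + 1 - k) t`.
-/

open Matrix BigOperators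

/-- Squared Frobenius norm. -/
noncomputable def frob2 {n p : ℕ} (M : Matrix (Fin n) (Fin p) ℝ) : ℝ :=
  ∑ i, ∑ j, (M i j) ^ 2

open Finset

lemma frob2_nonneg {n p : ℕ} (M : Matrix (Fin n) (Fin p) ℝ) : 0 ≤ frob2 M := by
  unfold frob2; positivity

lemma frob2_eq_trace {n p : ℕ} (M : Matrix (Fin n) (Fin p) ℝ) : frob2 M = trace (M * Mᵀ) := by
  simp [frob2, trace, mul_apply, sq]

lemma frob2_mul_transpose_of_orthonormal {n p k : ℕ} (M : Matrix (Fin n) (Fin k) ℝ)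
    {Q : Matrix (Fin p) (Fin k) ℝ} (hQ : Qᵀ * Q = 1) : frob2 (M * Qᵀ) = frob2 M := by
  rw [frob2_eq_trace, frob2_eq_trace, transpose_mul, transpose_transpose, Matrix.mul_assoc,
    ← Matrix.mul_assoc Qᵀ, hQ, Matrix.one_mul]

lemma frob2_sub_proj {m p : ℕ} {ι : Type*} [Fintype ι] [DecidableEq ι]
    (F : Matrix (Fin m) (Fin p) ℝ) {W : Matrix (Fin m) ι ℝ} (hW : Wᵀ * W = 1) :
    frob2 (F - W * Wᵀ * F) = trace (F * Fᵀ) - trace (Wᵀ * (F * Fᵀ) * W) := by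
  have hP : (1 - W * Wᵀ)ᵀ * (1 - W * Wᵀ) = 1 - W * Wᵀ := by
    simp only [transpose_sub, transpose_one, transpose_mul, transpose_transpose, Matrix.sub_mul,
      Matrix.mul_sub, Matrix.one_mul, Matrix.mul_one, Matrix.mul_assoc]
    rw [← Matrix.mul_assoc Wᵀ, hW, Matrix.one_mul]
    abel
  have hF : F - W * Wᵀ * F = (1 - W * Wᵀ) * F := by rw [Matrix.sub_mul, Matrix.one_mul]
  calc frob2 (F - W * Wᵀ * F)
      = trace (Fᵀ * ((1 - W * Wᵀ)ᵀ * (1 - W * Wᵀ)) * F) := by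
        rw [frob2_eq_trace, trace_mul_comm, hF, transpose_mul]
        simp only [Matrix.mul_assoc]
    _ = trace (F * Fᵀ) - trace (Fᵀ * W * (Wᵀ * F)) := by
        rw [hP, Matrix.mul_sub, Matrix.sub_mul, trace_sub, Matrix.mul_one, trace_mul_comm Fᵀ]
        simp only [Matrix.mul_assoc]
    _ = trace (F * Fᵀ) - trace (Wᵀ * (F * Fᵀ) * W) := by
        rw [trace_mul_comm (Fᵀ * W)]
        simp only [Matrix.mul_assoc]

lemma trace_conj_le_frob2 {m p : ℕ} {ι : Type*} [Fintype ι] [DecidableEq ι]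
    (M : Matrix (Fin m) (Fin p) ℝ) {W : Matrix (Fin m) ι ℝ} (hW : Wᵀ * W = 1) :
    trace (Wᵀ * (M * Mᵀ) * W) ≤ frob2 M := by
  have := frob2_nonneg (M - W * Wᵀ * M)
  rw [frob2_sub_proj M hW, ← frob2_eq_trace] at this
  linarith

lemma Matrix.PosSemidef.exists_antitone_diagonalization {m : ℕ} {A : Matrix (Fin m) (Fin m) ℝ}
    (hA : A.PosSemidef) :
    ∃ (V : Matrix (Fin m) (Fin m) ℝ) (μ : Fin m → ℝ), Vᵀ * V = 1 ∧ Antitone μ ∧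
      (∀ i, 0 ≤ μ i) ∧ A = V * diagonal μ * Vᵀ := by
  let V₀ : Matrix (Fin m) (Fin m) ℝ := hA.isHermitian.eigenvectorUnitary
  have hV₀ : V₀ᵀ * V₀ = 1 := by
    simpa [star_eq_conjTranspose] using
      Matrix.mem_unitaryGroup_iff'.mp hA.isHermitian.eigenvectorUnitary.2
  have hdec : A = V₀ * diagonal hA.isHermitian.eigenvalues * V₀ᵀ := by
    simpa [star_eq_conjTranspose] using hA.isHermitian.spectral_theorem
  let σ := Tuple.sort (OrderDual.toDual ∘ hA.isHermitian.eigenvalues)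
  refine ⟨V₀.submatrix id σ, hA.isHermitian.eigenvalues ∘ σ, ?_,
    fun a b hab => Tuple.monotone_sort (OrderDual.toDual ∘ hA.isHermitian.eigenvalues) hab,
    fun i => hA.eigenvalues_nonneg (σ i), ?_⟩
  · rw [transpose_submatrix, ← submatrix_mul _ _ _ _ _ Function.bijective_id, hV₀,
      submatrix_one_equiv]
  · rw [← submatrix_diagonal_equiv, submatrix_mul_equiv, transpose_submatrix, submatrix_mul_equiv,
      submatrix_id_id, ← hdec]

lemma transpose_mul_orthonormal {n ι : Type*} [Fintype n] [DecidableEq n] [DecidableEq ι]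
    {V : Matrix n n ℝ} {W : Matrix n ι ℝ} (hV : Vᵀ * V = 1) (hW : Wᵀ * W = 1) :
    (Vᵀ * W)ᵀ * (Vᵀ * W) = 1 := by
  rw [transpose_mul, transpose_transpose, Matrix.mul_assoc, ← Matrix.mul_assoc V,
    mul_eq_one_comm.1 hV, Matrix.one_mul, hW]

section Leverage

variable {n ι : Type*} [Fintype ι]

def leverage (M : Matrix n ι ℝ) (i : n) : ℝ := (M * Mᵀ) i i

lemma leverage_nonneg (M : Matrix n ι ℝ) (i : n) : 0 ≤ leverage M i :=
  sum_nonneg fun j _ => mul_self_nonneg (M i j)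

variable [Fintype n]

lemma trace_transpose_mul_diagonal_mul [DecidableEq n] (M : Matrix n ι ℝ) (μ : n → ℝ) :
    trace (Mᵀ * diagonal μ * M) = ∑ i, μ i * leverage M i := by
  rw [trace_mul_comm, ← Matrix.mul_assoc]
  simp [trace, leverage, mul_diagonal, mul_comm]

lemma trace_conj_eq_sum_leverage [DecidableEq n] (V : Matrix n n ℝ) (μ : n → ℝ)
    (W : Matrix n ι ℝ) :
    trace (Wᵀ * (V * diagonal μ * Vᵀ) * W) = ∑ i, μ i * leverage (Vᵀ * W) i := by
  rw [← trace_transpose_mul_diagonal_mul, transpose_mul, transpose_transpose]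
  simp only [Matrix.mul_assoc]

variable [DecidableEq ι] {M : Matrix n ι ℝ}

/-- `P = M * Mᵀ` is an orthogonal projection, so `P i i = ∑ l, P i l ^ 2 ≥ P i i ^ 2`. -/
lemma leverage_le_one (hM : Mᵀ * M = 1) (i : n) : leverage M i ≤ 1 := by
  set P := M * Mᵀ
  have hsq : P i i = ∑ l, P i l ^ 2 := by
    have hPP : P * P = P := by
      simp only [P, Matrix.mul_assoc, ← Matrix.mul_assoc Mᵀ M, hM, Matrix.one_mul]
    have hPt : Pᵀ = P := by simp [P]
    conv_lhs => rw [← hPP]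
    simp only [mul_apply, sq]
    refine sum_congr rfl fun l _ => ?_
    rw [← transpose_apply P l i, hPt]
  have hle : P i i ^ 2 ≤ P i i := hsq ▸ single_le_sum (f := fun l => P i l ^ 2)
    (fun l _ => sq_nonneg _) (mem_univ i)
  have h0 : 0 ≤ P i i := leverage_nonneg M i
  show P i i ≤ 1
  nlinarith

lemma sum_leverage (hM : Mᵀ * M = 1) : ∑ i, leverage M i = Fintype.card ι := by
  rw [show ∑ i, leverage M i = trace (M * Mᵀ) from rfl, trace_mul_comm, hM, trace_one]

end Leverage

section Majorization

variable {n : Type*} [Fintype n] [LinearOrder n] {μ c : n → ℝ}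

lemma sum_mul_le_sum_Iic [LocallyFiniteOrderBot n] (hμ : Antitone μ) (hc0 : ∀ i, 0 ≤ c i)
    (hc1 : ∀ i, c i ≤ 1) (j : n) (hc : ∑ i, c i = #(Iic j)) :
    ∑ i, μ i * c i ≤ ∑ i ∈ Iic j, μ i := by
  have key : ∀ i, μ i * c i ≤
      (if i ∈ Iic j then μ i else 0) + μ j * (c i - if i ∈ Iic j then 1 else 0) := by
    intro i
    by_cases hi : i ∈ Iic j
    · simp only [hi, if_true]
      nlinarith [mul_nonpos_of_nonneg_of_nonpos (sub_nonneg.2 (hμ (mem_Iic.1 hi)))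
        (sub_nonpos.2 (hc1 i))]
    · simp only [hi, if_false]
      nlinarith [mul_nonneg (sub_nonneg.2 (hμ (mem_Iic.not.1 hi |> not_le.1).le)) (hc0 i)]
  calc ∑ i, μ i * c i ≤ ∑ i, ((if i ∈ Iic j then μ i else 0) +
        μ j * (c i - if i ∈ Iic j then 1 else 0)) := sum_le_sum fun i _ => key i
    _ = ∑ i ∈ Iic j, μ i := by
        rw [sum_add_distrib, ← mul_sum, sum_sub_distrib, sum_ite_mem, sum_ite_mem, univ_inter,
          sum_const, hc]
        simp

lemma mul_le_sum_mul [LocallyFiniteOrderTop n] (hμ : Antitone μ) (hμ0 : ∀ i, 0 ≤ μ i)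
    (hc0 : ∀ i, 0 ≤ c i) (hc1 : ∀ i, c i ≤ 1) (j : n) :
    (∑ i, c i - #(Ioi j)) * μ j ≤ ∑ i, μ i * c i := by
  have key : ∀ i, μ j * (c i - if i ∈ Ioi j then 1 else 0) ≤ μ i * c i := by
    intro i
    by_cases hi : i ∈ Ioi j
    · simp only [hi, if_true]
      nlinarith [mul_nonneg (hμ0 i) (hc0 i),
        mul_nonpos_of_nonneg_of_nonpos (hμ0 j) (sub_nonpos.2 (hc1 i))]
    · simp only [hi, if_false]
      nlinarith [mul_nonneg (sub_nonneg.2 (hμ (mem_Ioi.not.1 hi |> not_lt.1))) (hc0 i)]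
  calc (∑ i, c i - #(Ioi j)) * μ j = ∑ i, μ j * (c i - if i ∈ Ioi j then 1 else 0) := by
        rw [← mul_sum, sum_sub_distrib, sum_ite_mem, univ_inter, sum_const]
        simp [mul_comm]
    _ ≤ ∑ i, μ i * c i := sum_le_sum fun i _ => key i

end Majorization

section KyFan

variable {n ι : Type*} [Fintype n] [LinearOrder n] [Fintype ι] [DecidableEq ι]
  {V : Matrix n n ℝ} {μ : n → ℝ} {W : Matrix n ι ℝ}

theorem trace_conj_le_sum_Iic [LocallyFiniteOrderBot n] (hV : Vᵀ * V = 1) (hμ : Antitone μ)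
    (hW : Wᵀ * W = 1) (j : n) (hcard : Fintype.card ι = #(Iic j)) :
    trace (Wᵀ * (V * diagonal μ * Vᵀ) * W) ≤ ∑ i ∈ Iic j, μ i := by
  have hM := transpose_mul_orthonormal hV hW
  rw [trace_conj_eq_sum_leverage]
  exact sum_mul_le_sum_Iic hμ (leverage_nonneg _) (leverage_le_one hM) j
    (by rw [sum_leverage hM, hcard])

theorem mul_le_trace_conj [LocallyFiniteOrderTop n] (hV : Vᵀ * V = 1) (hμ : Antitone μ)
    (hμ0 : ∀ i, 0 ≤ μ i) (hW : Wᵀ * W = 1) (j : n) :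
    ((Fintype.card ι : ℝ) - #(Ioi j)) * μ j ≤ trace (Wᵀ * (V * diagonal μ * Vᵀ) * W) := by
  have hM := transpose_mul_orthonormal hV hW
  rw [trace_conj_eq_sum_leverage, ← sum_leverage hM]
  exact mul_le_sum_mul hμ hμ0 (leverage_nonneg _) (leverage_le_one hM) j

end KyFan

lemma exists_trace_conj_eq_sum_Iio {m : ℕ} {V : Matrix (Fin m) (Fin m) ℝ} (hV : Vᵀ * V = 1)
    (μ : Fin m → ℝ) (j : Fin m) :
    ∃ W : Matrix (Fin m) (Fin j) ℝ,
      Wᵀ * W = 1 ∧ trace (Wᵀ * (V * diagonal μ * Vᵀ) * W) = ∑ i ∈ Iio j, μ i := by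
  let e := Fin.castLEEmb j.isLt.le
  have hVV : ∀ X : Matrix (Fin m) (Fin m) ℝ, Vᵀ * (V * X * Vᵀ) * V = X := fun X => by
    simp only [← Matrix.mul_assoc, hV, Matrix.one_mul]
    rw [Matrix.mul_assoc, hV, Matrix.mul_one]
  have hIio : (univ : Finset (Fin j)).map e = Iio j := by
    ext i
    simp only [e, mem_map, mem_univ, true_and, Fin.castLEEmb_apply, mem_Iio]
    exact ⟨fun ⟨a, ha⟩ => ha ▸ a.isLt, fun h => ⟨⟨i, h⟩, rfl⟩⟩
  refine ⟨V.submatrix id e, ?_, ?_⟩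
  · rw [transpose_submatrix, ← submatrix_mul _ _ _ _ _ Function.bijective_id, hV,
      submatrix_one_embedding]
  · have : (V.submatrix id e)ᵀ * (V * diagonal μ * Vᵀ) * V.submatrix id e =
        (Vᵀ * (V * diagonal μ * Vᵀ) * V).submatrix e e := rfl
    rw [this, hVV, submatrix_diagonal_embedding, trace_diagonal, ← hIio, sum_map]
    rfl

lemma transpose_fromCols_mul_fromCols_replicateCol {n ι : Type*} [Fintype n] [DecidableEq ι]
    {U : Matrix n ι ℝ} (hU : Uᵀ * U = 1) {w : n → ℝ} (hUw : Uᵀ *ᵥ w = 0) (hw : w ⬝ᵥ w = 1) :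
    (fromCols U (replicateCol Unit w))ᵀ * fromCols U (replicateCol Unit w) = 1 := by
  have h1 : Uᵀ * replicateCol Unit w = 0 := by
    ext i u; simpa [mul_apply, mulVec, dotProduct] using congrFun hUw i
  have h2 : replicateRow Unit w * U = 0 := by
    rw [← transpose_transpose (replicateRow Unit w * U), transpose_mul, transpose_replicateRow, h1,
      transpose_zero]
  rw [transpose_fromCols, fromRows_mul_fromCols, hU, transpose_replicateCol, h1, h2,
    replicateRow_mul_replicateCol, hw, ← fromBlocks_one]
  congr

lemma trace_conj_fromCols_replicateCol {n ι : Type*} [Fintype n] [Fintype ι] (A : Matrix n n ℝ)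
    (U : Matrix n ι ℝ) (w : n → ℝ) :
    trace ((fromCols U (replicateCol Unit w))ᵀ * A * fromCols U (replicateCol Unit w)) =
      trace (Uᵀ * A * U) + w ⬝ᵥ (A *ᵥ w) := by
  rw [transpose_fromCols, fromRows_mul, fromRows_mul_fromCols, transpose_replicateCol,
    ← replicateRow_vecMul, replicateRow_mul_replicateCol, dotProduct_mulVec]
  simp [trace, Fintype.sum_sum_type]

/-- Adjoining a unit vector `w ⊥ U` to `U` and applying Ky Fan's bound gives
`tr (Uᵀ A U) + wᵀ A w ≤ ∑ i ≤ j, μ i`, so `wᵀ A w ≤ μ j`. -/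
theorem dotProduct_mulVec_le_of_transpose_mulVec_eq_zero {n ι : Type*} [Fintype n]
    [LinearOrder n] [LocallyFiniteOrderBot n] [Fintype ι] [DecidableEq ι] {V : Matrix n n ℝ}
    {μ : n → ℝ} (hV : Vᵀ * V = 1) (hμ : Antitone μ) (j : n) {U : Matrix n ι ℝ}
    (hU : Uᵀ * U = 1) (hcard : Fintype.card ι = #(Iio j))
    (hUtr : ∑ i ∈ Iio j, μ i ≤ trace (Uᵀ * (V * diagonal μ * Vᵀ) * U))
    {v : n → ℝ} (hv : Uᵀ *ᵥ v = 0) :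
    v ⬝ᵥ (V * diagonal μ * Vᵀ) *ᵥ v ≤ μ j * (v ⬝ᵥ v) := by
  have hunit : ∀ w, Uᵀ *ᵥ w = 0 → w ⬝ᵥ w = 1 → w ⬝ᵥ (V * diagonal μ * Vᵀ) *ᵥ w ≤ μ j := by
    intro w hUw hw
    have hKyFan := trace_conj_le_sum_Iic hV hμ
      (transpose_fromCols_mul_fromCols_replicateCol hU hUw hw) j
      (by rw [Fintype.card_sum, Fintype.card_unit, hcard, Iic_eq_cons_Iio, card_cons])
    rw [trace_conj_fromCols_replicateCol, Iic_eq_cons_Iio, sum_cons] at hKyFan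
    linarith
  rcases eq_or_ne v 0 with rfl | hv0
  · simp
  have ha : 0 < v ⬝ᵥ v := lt_of_le_of_ne (Fintype.sum_nonneg fun i => mul_self_nonneg (v i))
    (Ne.symm (dotProduct_self_eq_zero.not.2 hv0))
  set s := √(v ⬝ᵥ v)
  have hs : 0 < s := Real.sqrt_pos.2 ha
  have hss : s * s = v ⬝ᵥ v := Real.mul_self_sqrt ha.le
  have h := hunit (s⁻¹ • v) (by simp [mulVec_smul, hv]) (by
    simp only [smul_dotProduct, dotProduct_smul, smul_eq_mul, ← hss]
    field_simp)
  simp only [mulVec_smul, smul_dotProduct, dotProduct_smul, smul_eq_mul] at h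
  calc v ⬝ᵥ (V * diagonal μ * Vᵀ) *ᵥ v
      = (s * s) * (s⁻¹ * (s⁻¹ * (v ⬝ᵥ (V * diagonal μ * Vᵀ) *ᵥ v))) := by field_simp
    _ ≤ (s * s) * μ j := by gcongr
    _ = μ j * (v ⬝ᵥ v) := by rw [hss, mul_comm]

lemma exists_orthonormal_annihilator {m p : ℕ} (G : Matrix (Fin m) (Fin p) ℝ) :
    ∃ (s : ℕ) (W : Matrix (Fin m) (Fin s) ℝ), m ≤ s + G.rank ∧ Wᵀ * W = 1 ∧ Wᵀ * G = 0 := by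
  let e := (WithLp.linearEquiv 2 ℝ (Fin m → ℝ)).symm
  let K := Submodule.span ℝ (Set.range (e ∘ G.col))
  have hK : Module.finrank ℝ K = G.rank := by
    rw [rank_eq_finrank_span_cols, ← LinearEquiv.finrank_map_eq e, Submodule.map_span,
      ← Set.range_comp]
    rfl
  let b := stdOrthonormalBasis ℝ Kᗮ
  have hb : Orthonormal ℝ (fun a => (b a : EuclideanSpace ℝ (Fin m))) :=
    b.orthonormal.comp_linearIsometry Kᗮ.subtypeₗᵢ
  let W : Matrix (Fin m) (Fin (Module.finrank ℝ Kᗮ)) ℝ :=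
    of fun i a => (b a : EuclideanSpace ℝ (Fin m)) i
  have hW : ∀ {q : ℕ} (X : Matrix (Fin m) (Fin q) ℝ) a c,
      (Wᵀ * X) a c = inner ℝ (b a : EuclideanSpace ℝ (Fin m)) (e (X.col c)) := by
    intro q X a c
    rw [EuclideanSpace.inner_eq_star_dotProduct, star_trivial, dotProduct_comm]
    rfl
  refine ⟨_, W, ?_, ?_, ?_⟩
  · have := K.finrank_add_finrank_orthogonal
    rw [finrank_euclideanSpace_fin, hK] at this
    omega
  · ext a a'
    rw [hW]
    exact orthonormal_iff_ite.1 hb a a'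
  · ext a c
    rw [hW]
    exact Submodule.inner_left_of_mem_orthogonal (K := K) (Submodule.subset_span ⟨c, rfl⟩) (b a).2

lemma dotProduct_sq_le {n : Type*} [Fintype n] (x y : n → ℝ) :
    (x ⬝ᵥ y) ^ 2 ≤ (x ⬝ᵥ x) * (y ⬝ᵥ y) := by
  simpa [dotProduct, sq] using sum_mul_sq_le_sq_mul_sq univ x y

/-- `‖E q‖² = ⟪Eᵀ (E q), q⟫ ≤ ‖Eᵀ (E q)‖ ‖q‖ ≤ √t ‖E q‖ ‖q‖`. -/
lemma mulVec_dotProduct_self_le {m n : Type*} [Fintype m] [Fintype n] (E : Matrix m n ℝ) {t : ℝ}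
    (ht : 0 ≤ t) (h : ∀ q, (Eᵀ *ᵥ (E *ᵥ q)) ⬝ᵥ (Eᵀ *ᵥ (E *ᵥ q)) ≤ t * ((E *ᵥ q) ⬝ᵥ (E *ᵥ q)))
    (q : n → ℝ) : (E *ᵥ q) ⬝ᵥ (E *ᵥ q) ≤ t * (q ⬝ᵥ q) := by
  set a := (E *ᵥ q) ⬝ᵥ (E *ᵥ q)
  have hq : 0 ≤ q ⬝ᵥ q := Fintype.sum_nonneg fun i => mul_self_nonneg (q i)
  have ha : a = (Eᵀ *ᵥ (E *ᵥ q)) ⬝ᵥ q := by rw [mulVec_transpose, ← dotProduct_mulVec]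
  have hsq : a * a ≤ a * (t * (q ⬝ᵥ q)) := by
    calc a * a = ((Eᵀ *ᵥ (E *ᵥ q)) ⬝ᵥ q) ^ 2 := by rw [sq, ← ha]
      _ ≤ (Eᵀ *ᵥ (E *ᵥ q)) ⬝ᵥ (Eᵀ *ᵥ (E *ᵥ q)) * (q ⬝ᵥ q) := dotProduct_sq_le _ _
      _ ≤ t * a * (q ⬝ᵥ q) := mul_le_mul_of_nonneg_right (h q) hq
      _ = a * (t * (q ⬝ᵥ q)) := by ring
  have ha0 : 0 ≤ a := Fintype.sum_nonneg fun i => mul_self_nonneg ((E *ᵥ q) i)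
  by_cases h0 : a = 0
  · rw [h0]; positivity
  · exact le_of_mul_le_mul_left hsq (lt_of_le_of_ne ha0 (Ne.symm h0))

lemma frob2_mul_le {m p k : ℕ} (E : Matrix (Fin m) (Fin p) ℝ) {Q : Matrix (Fin p) (Fin k) ℝ}
    (hQ : Qᵀ * Q = 1) {t : ℝ} (hE : ∀ q, (E *ᵥ q) ⬝ᵥ (E *ᵥ q) ≤ t * (q ⬝ᵥ q)) :
    frob2 (E * Q) ≤ k * t := by
  have hcol : ∀ c, Qᵀ c ⬝ᵥ Qᵀ c = 1 := fun c => by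
    have := congrFun (congrFun hQ c) c
    rwa [mul_apply', one_apply_eq] at this
  calc frob2 (E * Q) = ∑ c, (E *ᵥ Qᵀ c) ⬝ᵥ (E *ᵥ Qᵀ c) := by
        rw [frob2, sum_comm]
        simp only [sq]
        rfl
    _ ≤ ∑ c, t * (Qᵀ c ⬝ᵥ Qᵀ c) := sum_le_sum fun c _ => hE _
    _ = k * t := by simp [hcol]

section Residual

variable {m p k : ℕ} {F : Matrix (Fin m) (Fin p) ℝ} {V : Matrix (Fin m) (Fin m) ℝ}
  {μ : Fin m → ℝ}

lemma sum_Iio_le_trace_of_forall_frob2_le (hV : Vᵀ * V = 1)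
    (hA : F * Fᵀ = V * diagonal μ * Vᵀ) (j : Fin m) {U : Matrix (Fin m) (Fin j) ℝ}
    (hU : Uᵀ * U = 1) (hUopt : ∀ U' : Matrix (Fin m) (Fin j) ℝ, U'ᵀ * U' = 1 →
      frob2 (F - U * Uᵀ * F) ≤ frob2 (F - U' * U'ᵀ * F)) :
    ∑ i ∈ Iio j, μ i ≤ trace (Uᵀ * (F * Fᵀ) * U) := by
  obtain ⟨W, hW, htr⟩ := exists_trace_conj_eq_sum_Iio hV μ j
  have := hUopt W hW
  rw [frob2_sub_proj F hU, frob2_sub_proj F hW, hA] at this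
  rw [hA, ← htr]
  linarith

lemma frob2_sub_proj_mul_le (hV : Vᵀ * V = 1) (hμ : Antitone μ) (hμ0 : ∀ i, 0 ≤ μ i)
    (hA : F * Fᵀ = V * diagonal μ * Vᵀ) (j : Fin m) {U : Matrix (Fin m) (Fin j) ℝ}
    (hU : Uᵀ * U = 1) (hUtr : ∑ i ∈ Iio j, μ i ≤ trace (Uᵀ * (F * Fᵀ) * U))
    {Q : Matrix (Fin p) (Fin k) ℝ} (hQ : Qᵀ * Q = 1) :
    frob2 ((F - U * Uᵀ * F) * (Q * Qᵀ)) ≤ k * μ j := by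
  set E := F - U * Uᵀ * F
  have hUE : Uᵀ * E = 0 := by
    rw [Matrix.mul_sub, ← Matrix.mul_assoc, ← Matrix.mul_assoc, hU, Matrix.one_mul, sub_self]
  rw [← Matrix.mul_assoc, frob2_mul_transpose_of_orthonormal _ hQ]
  refine frob2_mul_le E hQ (mulVec_dotProduct_self_le E (hμ0 j) fun q => ?_)
  set v := E *ᵥ q
  have hv : Uᵀ *ᵥ v = 0 := by rw [mulVec_mulVec, hUE, zero_mulVec]
  have hEv : Eᵀ *ᵥ v = Fᵀ *ᵥ v := by
    rw [transpose_sub, sub_mulVec, transpose_mul, ← mulVec_mulVec, transpose_mul,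
      transpose_transpose, ← mulVec_mulVec, hv, mulVec_zero, mulVec_zero, sub_zero]
  rw [hEv, mulVec_transpose, ← dotProduct_mulVec, ← mulVec_transpose, mulVec_mulVec, hA]
  rw [hA] at hUtr
  exact dotProduct_mulVec_le_of_transpose_mulVec_eq_zero hV hμ j hU (by simp) hUtr hv

lemma mul_le_frob2_sub_of_rank_le (hV : Vᵀ * V = 1) (hμ : Antitone μ) (hμ0 : ∀ i, 0 ≤ μ i)
    (hA : F * Fᵀ = V * diagonal μ * Vᵀ) (j : Fin m) {G : Matrix (Fin m) (Fin p) ℝ}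
    (hG : G.rank ≤ k) : ((j : ℝ) + 1 - k) * μ j ≤ frob2 (F - G) := by
  obtain ⟨s, W, hs, hW, hWG⟩ := exists_orthonormal_annihilator G
  have hWF : Wᵀ * (F - G) = Wᵀ * F := by rw [Matrix.mul_sub, hWG, sub_zero]
  have hsq : ∀ X : Matrix (Fin m) (Fin p) ℝ, Wᵀ * (X * Xᵀ) * W = (Wᵀ * X) * (Wᵀ * X)ᵀ :=
    fun X => by simp only [transpose_mul, transpose_transpose, Matrix.mul_assoc]
  have hms : (m : ℝ) - k ≤ s := by
    rw [sub_le_iff_le_add]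
    exact_mod_cast hs.trans (by omega)
  calc ((j : ℝ) + 1 - k) * μ j = ((m : ℝ) - k - #(Ioi j)) * μ j := by
        rw [Fin.card_Ioi, Nat.sub_sub, Nat.cast_sub (by have := j.isLt; omega)]
        push_cast
        ring
    _ ≤ ((Fintype.card (Fin s) : ℝ) - #(Ioi j)) * μ j := by
        rw [Fintype.card_fin]; gcongr; exact hμ0 j
    _ ≤ trace (Wᵀ * (F * Fᵀ) * W) := by rw [hA]; exact mul_le_trace_conj hV hμ hμ0 hW j
    _ = trace (Wᵀ * ((F - G) * (F - G)ᵀ) * W) := by rw [hsq, hsq, hWF]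
    _ ≤ frob2 (F - G) := trace_conj_le_frob2 _ hW

end Residual

theorem stmt10_general
    {m p k r : ℕ}
    (ε : ℝ) (hε : 0 < ε) (hε1 : ε < 1)
    (hr : r = ⌈(k : ℝ) / ε⌉₊) (hrm : r ≤ m)
    (F : Matrix (Fin m) (Fin p) ℝ)
    (U : Matrix (Fin m) (Fin r) ℝ) (hUorth : Uᵀ * U = 1)
    (hUopt : ∀ U' : Matrix (Fin m) (Fin r) ℝ, U'ᵀ * U' = 1 →
      frob2 (F - U * Uᵀ * F) ≤ frob2 (F - U' * U'ᵀ * F))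
    (Q : Matrix (Fin p) (Fin k) ℝ) (hQorth : Qᵀ * Q = 1) :
    frob2 ((F - U * Uᵀ * F) * (Q * Qᵀ)) ≤
      ε / (1 - ε) * sInf {x : ℝ | ∃ G : Matrix (Fin m) (Fin p) ℝ, G.rank ≤ k ∧
        x = frob2 (F - G)} := by
  have hcoef : 0 ≤ ε / (1 - ε) := div_nonneg hε.le (sub_nonneg.2 hε1.le)
  rcases hrm.eq_or_lt with rfl | hrm
  · rw [mul_eq_one_comm.1 hUorth, Matrix.one_mul, sub_self, Matrix.zero_mul]
    refine le_of_eq_of_le (by simp [frob2]) (mul_nonneg hcoef (Real.sInf_nonneg ?_))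
    rintro _ ⟨G, -, rfl⟩
    exact frob2_nonneg _
  have hFF : (F * Fᵀ).PosSemidef := by simpa using posSemidef_self_mul_conjTranspose F
  obtain ⟨V, μ, hV, hμ, hμ0, hA⟩ := hFF.exists_antitone_diagonalization
  let j : Fin m := ⟨r, hrm⟩
  have hkr : (k : ℝ) ≤ ε * r := by
    rw [hr, mul_comm, ← div_le_iff₀ hε]
    exact Nat.le_ceil _
  calc frob2 ((F - U * Uᵀ * F) * (Q * Qᵀ)) ≤ k * μ j :=
        frob2_sub_proj_mul_le hV hμ hμ0 hA j hUorth
          (sum_Iio_le_trace_of_forall_frob2_le hV hA j hUorth hUopt) hQorth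
    _ ≤ ε / (1 - ε) * ((r + 1 - k) * μ j) := by
        rw [div_mul_eq_mul_div, le_div_iff₀ (by linarith)]
        nlinarith [mul_le_mul_of_nonneg_right hkr (hμ0 j), mul_nonneg hε.le (hμ0 j)]
    _ ≤ ε / (1 - ε) * sInf _ := by
        gcongr
        refine le_csInf ⟨_, 0, by simp, rfl⟩ ?_
        rintro _ ⟨G, hG, rfl⟩
        exact mul_le_frob2_sub_of_rank_le hV hμ hμ0 hA j hG

/-- projection-cost inequality. -/
theorem stmt10
    {m p k r : ℕ} (hk : 1 ≤ k)
    (ε : ℝ) (hε : 0 < ε) (hε1 : ε < 1)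
    (hr : r = ⌈(k : ℝ) / ε⌉₊) (hrm : r ≤ m)
    (F : Matrix (Fin m) (Fin p) ℝ)
    (U : Matrix (Fin m) (Fin r) ℝ) (hUorth : Uᵀ * U = 1)
    (hUopt : ∀ U' : Matrix (Fin m) (Fin r) ℝ, U'ᵀ * U' = 1 →
      frob2 (F - U * Uᵀ * F) ≤ frob2 (F - U' * U'ᵀ * F))
    (Q : Matrix (Fin p) (Fin k) ℝ) (hQorth : Qᵀ * Q = 1) :
    frob2 ((F - U * Uᵀ * F) * (Q * Qᵀ)) ≤
      ε / (1 - ε) * sInf {x : ℝ | ∃ G : Matrix (Fin m) (Fin p) ℝ, G.rank ≤ k ∧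
        x = frob2 (F - G)} :=
  stmt10_general ε hε hε1 hr hrm F U hUorth hUopt Q hQorth
end

section
/- Coloring from exact binary masked factorization: Let G = (V, E) be an undirected graph on vertex set [n], and let U, V ∈ {0,1}^{n×k'} be binary matrices with rows u_1,…,u_n and v_1,…,v_n respectively. Suppose that for every i ∈ [n] the inner product u_iᵀv_i = 1, and for every edge {i,j} ∈ E both u_iᵀv_j = 0 and u_jᵀv_i = 0. Then G admits a proper coloring with at most k' colors, i.e., there is a function c : [n] → [k'] such that c(i) ≠ c(j) for every edge {i,j} ∈ E. -/
open BigOperators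

/-!
Each vertex `i` has a coordinate `l` with `U i l = V i l = 1`, since `u_iᵀv_i = 1` is a sum of
`0/1` products; colour `i` by such an `l`. If two adjacent vertices `i, j` received the same
colour `l`, then `U i l * V j l = 1` would be a positive term of the sum `u_iᵀv_j` of nonnegative
terms, contradicting `u_iᵀv_j = 0`.
-/

section BinaryVectors

variable {ι R : Type*} [Fintype ι]

lemma exists_eq_one_and_eq_one_of_sum_mul_ne_zero [Semiring R] {u v : ι → R}
    (hu : ∀ l, u l = 0 ∨ u l = 1) (hv : ∀ l, v l = 0 ∨ v l = 1) (h : ∑ l, u l * v l ≠ 0) :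
    ∃ l, u l = 1 ∧ v l = 1 := by
  obtain ⟨l, -, hl⟩ := Finset.exists_ne_zero_of_sum_ne_zero h
  rcases hu l with hul | hul
  · simp [hul] at hl
  rcases hv l with hvl | hvl
  · simp [hvl] at hl
  exact ⟨l, hul, hvl⟩

lemma sum_mul_ne_zero_of_eq_one_of_eq_one [Semiring R] [PartialOrder R] [IsOrderedRing R]
    [Nontrivial R] {u v : ι → R} (hu : ∀ l, 0 ≤ u l) (hv : ∀ l, 0 ≤ v l) {l : ι} (hul : u l = 1)
    (hvl : v l = 1) : ∑ l, u l * v l ≠ 0 := by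
  intro h
  have := (Finset.sum_eq_zero_iff_of_nonneg fun l _ => mul_nonneg (hu l) (hv l)).mp h l
    (Finset.mem_univ l)
  simp only [hul, hvl, mul_one, one_ne_zero] at this

end BinaryVectors

lemma nonneg_of_eq_zero_or_eq_one {R : Type*} [Semiring R] [PartialOrder R] [IsOrderedRing R]
    {x : R} (hx : x = 0 ∨ x = 1) : 0 ≤ x := by
  rcases hx with rfl | rfl
  exacts [le_rfl, zero_le_one]

lemma SimpleGraph.nonempty_coloring_of_binary_factorization {W ι R : Type*} [Fintype ι]
    [Semiring R] [PartialOrder R] [IsOrderedRing R] [Nontrivial R] (G : SimpleGraph W) (U V : W → ι → R)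
    (hU : ∀ i l, U i l = 0 ∨ U i l = 1) (hV : ∀ i l, V i l = 0 ∨ V i l = 1)
    (hdiag : ∀ i, ∑ l, U i l * V i l ≠ 0) (hedge : ∀ i j, G.Adj i j → ∑ l, U i l * V j l = 0) :
    Nonempty (G.Coloring ι) := by
  choose c hc using fun i => exists_eq_one_and_eq_one_of_sum_mul_ne_zero (hU i) (hV i) (hdiag i)
  refine ⟨Coloring.mk c fun {i j} hij hcij => ?_⟩
  refine sum_mul_ne_zero_of_eq_one_of_eq_one (fun l => nonneg_of_eq_zero_or_eq_one (hU i l))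
    (fun l => nonneg_of_eq_zero_or_eq_one (hV j l)) (hc i).1 ?_ (hedge i j hij)
  rw [hcij]
  exact (hc j).2

/-- coloring from an exact binary masked factorization. -/
theorem stmt14
    {n k' : ℕ} (G : SimpleGraph (Fin n))
    (U V : Matrix (Fin n) (Fin k') ℝ)
    (hUbin : ∀ i l, U i l = 0 ∨ U i l = 1)
    (hVbin : ∀ i l, V i l = 0 ∨ V i l = 1)
    (hdiag : ∀ i, ∑ l, U i l * V i l = 1)
    (hedge : ∀ i j, G.Adj i j → (∑ l, U i l * V j l = 0 ∧ ∑ l, U j l * V i l = 0)) :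
    ∃ c : Fin n → Fin k', ∀ i j, G.Adj i j → c i ≠ c j := by
  obtain ⟨C⟩ := G.nonempty_coloring_of_binary_factorization U V hUbin hVbin
    (fun i => (hdiag i).symm ▸ one_ne_zero) (fun i j hij => (hedge i j hij).1)
  exact ⟨C, fun _ _ hij => C.valid hij⟩
end

section
/- Coloring from exact non-negative masked factorization: Let G = (V, E) be an undirected graph on vertex set [n], and let U, V ∈ ℝ^{n×k'} be matrices with all entries non-negative, with rows u_1,…,u_n and v_1,…,v_n respectively. Suppose that for every i ∈ [n] the inner product u_iᵀv_i = 1, and for every edge {i,j} ∈ E both u_iᵀv_j = 0 and u_jᵀv_i = 0. Then G admits a proper coloring with at most k' colors, i.e., there is a function c : [n] → [k'] such that c(i) ≠ c(j) for every edge {i,j} ∈ E. -/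
/-!
Colour vertex `i` by an index `l` with `U i l > 0` and `V i l > 0`. Adjacent vertices of the same
colour `l` would make the term `U i l * V j l` of `∑ l, U i l * V j l = 0` positive.
-/

theorem sum_mul_pos_iff_of_nonneg {ι R : Type*} [Fintype ι] [Semiring R] [LinearOrder R]
    [IsStrictOrderedRing R] {u v : ι → R} (hu : ∀ l, 0 ≤ u l) (hv : ∀ l, 0 ≤ v l) :
    0 < ∑ l, u l * v l ↔ ∃ l, 0 < u l ∧ 0 < v l := by
  rw [Finset.sum_pos_iff_of_nonneg fun l _ => mul_nonneg (hu l) (hv l)]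
  simp only [Finset.mem_univ, true_and]
  exact exists_congr fun l =>
    ⟨fun h => (pos_and_pos_or_neg_and_neg_of_mul_pos h).resolve_right fun h' => (hu l).not_gt h'.1,
      fun h => mul_pos h.1 h.2⟩

/-- coloring from an exact non-negative masked factorization. -/
theorem stmt15
    {n k' : ℕ} (G : SimpleGraph (Fin n))
    (U V : Matrix (Fin n) (Fin k') ℝ)
    (hUnonneg : ∀ i l, 0 ≤ U i l)
    (hVnonneg : ∀ i l, 0 ≤ V i l)
    (hdiag : ∀ i, ∑ l, U i l * V i l = 1)
    (hedge : ∀ i j, G.Adj i j → (∑ l, U i l * V j l = 0 ∧ ∑ l, U j l * V i l = 0)) :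
    ∃ c : Fin n → Fin k', ∀ i j, G.Adj i j → c i ≠ c j := by
  have hcolour (i : Fin n) : ∃ l, 0 < U i l ∧ 0 < V i l :=
    (sum_mul_pos_iff_of_nonneg (hUnonneg i) (hVnonneg i)).mp (by rw [hdiag i]; exact one_pos)
  choose c hcU hcV using hcolour
  refine ⟨c, fun i j hij hcij => ?_⟩
  have hpos : 0 < ∑ l, U i l * V j l :=
    (sum_mul_pos_iff_of_nonneg (hUnonneg i) (hVnonneg j)).mpr ⟨c i, hcU i, hcij ▸ hcV j⟩
  exact hpos.ne' (hedge i j hij).1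
end

section
/- Main structural result for low-rank matrices and sparse masks: Let W ∈ {0,1}^{n×p} have at most t zero entries in each column, let L ∈ ℝ^{n×p} have rank at most k, and let 0 < ε < 1. Then there exists a subset of row indices S ⊆ [n] with |S| ≤ tk/ε such that, letting Ľ and W̌ denote the submatrices of L and W obtained by deleting the rows indexed by S, it holds that ‖Ľ ∘ (1 − W̌)‖_F² ≤ (ε/(1−ε)) · ‖L ∘ W‖_F². -/
open Matrix Finset
open scoped RealInnerProductSpace

/-!
Rescale the rows of `L` so that the mass `ρ i = ∑ j (L i j * (1 - W i j))²` of each row off the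
support of `W` is capped at a level `c`; this does not increase the rank. Split the rescaled
matrix as `A + N`, with `A` living on the zeros of `W` and `N` on its support. Column by column,
`aⱼ ⟂ wⱼ` and `aⱼ + wⱼ` lies in the column space `V`, so Pythagoras and Cauchy–Schwarz give
`‖A‖⁴ ≤ ‖P_V A‖² (‖A‖² + ‖N‖²)`, while sparsity of the columns of `A` gives
`‖P_V A‖² ≤ dim V · t · c`. Taking for `S` the `⌊tk/ε⌋` rows of largest mass and for `c` the
largest remaining mass, the capped mass is `|S| c + ∑_{i ∉ S} ρ i`, and the inequality
rearranges into the claim.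
-/

namespace Submodule

variable {E : Type*} [NormedAddCommGroup E] [InnerProductSpace ℝ E]
  (V : Submodule ℝ E) [V.HasOrthogonalProjection]

lemma norm_sq_eq_add_norm_sq_sub_starProjection (x : E) :
    ‖x‖ ^ 2 = ‖V.starProjection x‖ ^ 2 + ‖x - V.starProjection x‖ ^ 2 := by
  rw [V.norm_sq_eq_add_norm_sq_starProjection x, starProjection_orthogonal']
  rfl

lemma norm_sq_eq_of_add_mem {a w : E} (h : a + w ∈ V) :
    ‖a‖ ^ 2 = ‖V.starProjection a‖ ^ 2 + ‖w‖ ^ 2 - ‖V.starProjection w‖ ^ 2 := by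
  have hrest : a - V.starProjection a = -(w - V.starProjection w) := by
    have := V.starProjection_eq_self_iff.mpr h
    rw [map_add] at this
    rw [neg_sub, sub_eq_sub_iff_add_eq_add, ← this]
    abel
  have ha := V.norm_sq_eq_add_norm_sq_sub_starProjection a
  have hw := V.norm_sq_eq_add_norm_sq_sub_starProjection w
  rw [hrest, norm_neg] at ha
  linarith

lemma norm_sq_le_of_add_mem {a w : E} (h : a + w ∈ V) (haw : ⟪a, w⟫ = 0) :
    ‖w‖ ^ 2 ≤ ‖a + w‖ * ‖V.starProjection w‖ :=
  calc ‖w‖ ^ 2 = ⟪a + w, w⟫ := by rw [inner_add_left, haw, real_inner_self_eq_norm_sq, zero_add]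
    _ = ⟪a + w, V.starProjection w⟫ := by
      rw [← V.inner_starProjection_left_eq_right, V.starProjection_eq_self_iff.mpr h]
    _ ≤ ‖a + w‖ * ‖V.starProjection w‖ := real_inner_le_norm _ _

lemma sq_sum_norm_sq_le_of_add_mem {ι : Type*} [Fintype ι] (a w : ι → E)
    (h : ∀ j, a j + w j ∈ V) (haw : ∀ j, ⟪a j, w j⟫ = 0) :
    (∑ j, ‖a j‖ ^ 2) ^ 2 ≤
      (∑ j, ‖V.starProjection (a j)‖ ^ 2) * (∑ j, ‖a j‖ ^ 2 + ∑ j, ‖w j‖ ^ 2) := by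
  set Ψ := ∑ j, ‖a j‖ ^ 2
  set b := ∑ j, ‖w j‖ ^ 2
  set G := ∑ j, ‖V.starProjection (w j)‖ ^ 2
  have hΨ : Ψ = ∑ j, ‖V.starProjection (a j)‖ ^ 2 + b - G := by
    simp only [Ψ, b, G, ← sum_add_distrib, ← sum_sub_distrib, V.norm_sq_eq_of_add_mem (h _)]
  have hpyth : ∑ j, ‖a j + w j‖ ^ 2 = Ψ + b := by
    simp only [Ψ, b, ← sum_add_distrib, norm_add_sq_real, haw]
    ring_nf
  have hb : b ^ 2 ≤ (Ψ + b) * G :=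
    calc b ^ 2 ≤ (∑ j, ‖a j + w j‖ * ‖V.starProjection (w j)‖) ^ 2 := by
          gcongr
          exact sum_le_sum fun j _ => V.norm_sq_le_of_add_mem (h j) (haw j)
      _ ≤ (Ψ + b) * G := hpyth ▸ sum_mul_sq_le_sq_mul_sq _ _ _
  -- with `Π = Ψ - b + G`, `Π (Ψ + b) - Ψ² = (Ψ + b) G - b²`
  rw [show ∑ j, ‖V.starProjection (a j)‖ ^ 2 = Ψ - b + G by linarith]
  linear_combination hb

lemma sum_norm_sq_starProjection_le [FiniteDimensional ℝ V] {ι : Type*} [Fintype ι]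
    (a : ι → E) {C : ℝ} (hC : ∀ u ∈ V, ‖u‖ = 1 → ∑ j, ⟪u, a j⟫ ^ 2 ≤ C) :
    ∑ j, ‖V.starProjection (a j)‖ ^ 2 ≤ Module.finrank ℝ V * C := by
  let b := stdOrthonormalBasis ℝ V
  have hparseval (x : E) : ‖V.starProjection x‖ ^ 2 = ∑ l, ⟪(b l : E), x⟫ ^ 2 := by
    rw [V.starProjection_apply, norm_coe, ← b.sum_sq_inner_right]
    simp only [V.inner_orthogonalProjectionOnto_eq_of_mem_left]
  calc ∑ j, ‖V.starProjection (a j)‖ ^ 2 = ∑ l, ∑ j, ⟪(b l : E), a j⟫ ^ 2 := by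
        simp only [hparseval]; exact sum_comm
    _ ≤ ∑ _l, C := sum_le_sum fun l _ => hC _ (b l).2 (by rw [norm_coe, b.orthonormal.1 l])
    _ = Module.finrank ℝ V * C := by simp

end Submodule

namespace Matrix

variable {m ι : Type*} [Fintype m] [Fintype ι]

lemma sum_sq_sum_mul_le_of_sparse (A : Matrix m ι ℝ) {t : ℕ} {c : ℝ}
    (hcol : ∀ j, #{i | A i j ≠ 0} ≤ t) (hrow : ∀ i, ∑ j, A i j ^ 2 ≤ c) (u : m → ℝ) :
    ∑ j, (∑ i, u i * A i j) ^ 2 ≤ t * c * ∑ i, u i ^ 2 := by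
  have hcolumn (j : ι) : (∑ i, u i * A i j) ^ 2 ≤ t * ∑ i, (u i * A i j) ^ 2 := by
    rw [← sum_filter_of_ne (p := fun i => A i j ≠ 0) fun i _ h => right_ne_zero_of_mul h]
    calc (∑ i with A i j ≠ 0, u i * A i j) ^ 2
        ≤ #{i | A i j ≠ 0} * ∑ i with A i j ≠ 0, (u i * A i j) ^ 2 := sq_sum_le_card_mul_sum_sq
      _ ≤ t * ∑ i, (u i * A i j) ^ 2 := by
        gcongr
        · exact hcol j
        · exact filter_subset _ _
  calc ∑ j, (∑ i, u i * A i j) ^ 2 ≤ ∑ j, t * ∑ i, (u i * A i j) ^ 2 :=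
        sum_le_sum fun j _ => hcolumn j
    _ = t * ∑ i, u i ^ 2 * ∑ j, A i j ^ 2 := by
      rw [← mul_sum, sum_comm]
      simp only [mul_sum, mul_pow]
    _ ≤ t * ∑ i, u i ^ 2 * c := by gcongr with i; exact hrow i
    _ = t * c * ∑ i, u i ^ 2 := by rw [← sum_mul]; ring

lemma sq_sum_sq_le_rank_mul_of_sparse (A N : Matrix m ι ℝ) {t : ℕ} {c : ℝ}
    (hAN : ∀ i j, A i j * N i j = 0) (hcol : ∀ j, #{i | A i j ≠ 0} ≤ t)
    (hrow : ∀ i, ∑ j, A i j ^ 2 ≤ c) (hc : 0 ≤ c) :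
    (∑ i, ∑ j, A i j ^ 2) ^ 2 ≤
      (A + N).rank * t * c * (∑ i, ∑ j, A i j ^ 2 + ∑ i, ∑ j, N i j ^ 2) := by
  let col (M : Matrix m ι ℝ) (j : ι) : EuclideanSpace ℝ m := WithLp.toLp 2 (Mᵀ j)
  have hnorm (M : Matrix m ι ℝ) : ∑ j, ‖col M j‖ ^ 2 = ∑ i, ∑ j, M i j ^ 2 := by
    simp only [EuclideanSpace.real_norm_sq_eq]
    exact sum_comm
  let V := (Submodule.span ℝ (Set.range (A + N)ᵀ)).map
    (WithLp.linearEquiv 2 ℝ (m → ℝ)).symm.toLinearMap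
  have hV : Module.finrank ℝ V ≤ (A + N).rank := by
    rw [rank_eq_finrank_span_cols]
    exact Submodule.finrank_map_le _ _
  have hsplit := V.sq_sum_norm_sq_le_of_add_mem (col A) (col N)
    (fun j => Submodule.mem_map_of_mem (Submodule.subset_span ⟨j, rfl⟩))
    (fun j => by
      simp only [col, EuclideanSpace.inner_toLp_toLp, dotProduct, transpose_apply, star_trivial]
      exact sum_eq_zero fun i _ => by rw [mul_comm, hAN])
  have hproj := V.sum_norm_sq_starProjection_le (col A) (C := t * c) fun u _ hu => by
    have hinner (j : ι) : ⟪u, col A j⟫ = ∑ i, u i * A i j := by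
      simp [col, EuclideanSpace.inner_eq_star_dotProduct, dotProduct, mul_comm]
    have hunit : ∑ i, u i ^ 2 = 1 := by rw [← EuclideanSpace.real_norm_sq_eq, hu, one_pow]
    simpa only [hinner, hunit, mul_one] using A.sum_sq_sum_mul_le_of_sparse hcol hrow u
  rw [hnorm, hnorm] at hsplit
  calc _ ≤ _ := hsplit
    _ ≤ Module.finrank ℝ V * t * c * _ := by gcongr; simpa only [mul_assoc] using hproj
    _ ≤ _ := by gcongr

lemma sq_sum_min_le_rank_mul (L W : Matrix m ι ℝ) {t : ℕ} (hWbin : ∀ i j, W i j = 0 ∨ W i j = 1)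
    (hWcol : ∀ j, #{i | W i j = 0} ≤ t) {c : ℝ} (hc : 0 ≤ c) :
    (∑ i, min (∑ j, (L i j * (1 - W i j)) ^ 2) c) ^ 2 ≤
      L.rank * t * c * (∑ i, min (∑ j, (L i j * (1 - W i j)) ^ 2) c +
        ∑ i, ∑ j, (L i j * W i j) ^ 2) := by
  classical
  set ρ : m → ℝ := fun i => ∑ j, (L i j * (1 - W i j)) ^ 2
  -- scaling row `i` by `θ i` caps `ρ i` at `c` (if `ρ i = 0` then `θ i = 0`, as `x / 0 = 0`)
  let θ : m → ℝ := fun i => √(min (ρ i) c / ρ i)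
  have hθ_sq (i : m) : θ i ^ 2 = min (ρ i) c / ρ i := Real.sq_sqrt (by positivity)
  have hθ_le (i : m) : θ i ^ 2 ≤ 1 := hθ_sq i ▸ div_le_one_of_le₀ (min_le_left _ _) (by positivity)
  have hθρ (i : m) : θ i ^ 2 * ρ i = min (ρ i) c := by
    rcases eq_or_ne (ρ i) 0 with h | h
    · simp [h, hc]
    · rw [hθ_sq, div_mul_cancel₀ _ h]
  let A : Matrix m ι ℝ := of fun i j => θ i * (L i j * (1 - W i j))
  let N : Matrix m ι ℝ := of fun i j => θ i * (L i j * W i j)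
  have hrowA (i : m) : ∑ j, A i j ^ 2 = min (ρ i) c := by
    rw [← hθρ, mul_sum]
    simp only [A, of_apply, mul_pow]
  have hrank : (A + N).rank ≤ L.rank := by
    have : A + N = diagonal θ * L := by
      ext i j
      simp only [A, N, add_apply, of_apply, diagonal_mul]
      ring
    exact this ▸ rank_mul_le_right _ _
  have hN : ∑ i, ∑ j, N i j ^ 2 ≤ ∑ i, ∑ j, (L i j * W i j) ^ 2 := by
    refine sum_le_sum fun i _ => sum_le_sum fun j _ => ?_
    simp only [N, of_apply]
    rw [mul_pow]
    exact mul_le_of_le_one_left (sq_nonneg _) (hθ_le i)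
  have key := sq_sum_sq_le_rank_mul_of_sparse A N
    (fun i j => by rcases hWbin i j with h | h <;> simp [A, N, h])
    (fun j => (card_le_card fun i => by
      rcases hWbin i j with h | h <;> simp [A, h]).trans (hWcol j))
    (fun i => (hrowA i).trans_le (min_le_right _ _)) hc
  simp only [hrowA] at key
  exact key.trans (by gcongr)

end Matrix

lemma le_div_one_sub_mul_of_sq_le {s q c X B ε : ℝ} (hε : 0 < ε) (hε1 : ε < 1)
    (hq : 0 ≤ q) (hqs : q ≤ s) (hqε : q ≤ 2 * ε * s) (hc : 0 ≤ c) (hX : 0 ≤ X) (hB : 0 ≤ B)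
    (h : (s * c + X) ^ 2 ≤ q * c * (s * c + X + B)) :
    X ≤ ε / (1 - ε) * B := by
  rw [div_mul_eq_mul_div, le_div_iff₀ (by linarith)]
  by_contra! hlt
  have hX0 : 0 < X := by nlinarith
  -- `ε (q c (s c + X + B) - (s c + X)²)
  --   = -ε s (s - q) c² - c X (2 ε s - q) - q c ((1 - ε) X - ε B) - ε X² < 0`
  nlinarith [mul_nonneg (mul_nonneg (hq.trans hqs) (sub_nonneg.2 hqs)) (sq_nonneg c),
    mul_nonneg (mul_nonneg hc hX) (sub_nonneg.2 hqε), mul_pos hX0 hX0,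
    mul_nonneg (mul_nonneg hc hq) (sub_nonneg.2 hlt.le)]

lemma le_two_mul_mul_floor_div (q : ℕ) {ε : ℝ} (hε : 0 < ε) (hε1 : ε ≤ 1) :
    (q : ℝ) ≤ 2 * ε * ⌊q / ε⌋₊ := by
  rcases q.eq_zero_or_pos with rfl | hq
  · simp
  have h1 : 1 ≤ (q : ℝ) / ε := (one_le_div hε).2 (hε1.trans (by exact_mod_cast hq))
  have h2 : (1 : ℝ) ≤ ⌊(q : ℝ) / ε⌋₊ := by exact_mod_cast Nat.one_le_floor_iff _ |>.2 h1
  have h3 := Nat.lt_floor_add_one ((q : ℝ) / ε)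
  rw [div_lt_iff₀ hε] at h3
  nlinarith

lemma exists_card_eq_forall_le {α β : Type*} [Fintype α] [LinearOrder β] (f : α → β) {s : ℕ}
    (hs : s ≤ Fintype.card α) : ∃ S : Finset α, #S = s ∧ ∀ i ∈ S, ∀ j ∉ S, f j ≤ f i := by
  classical
  induction s with
  | zero => exact ⟨∅, card_empty, by simp⟩
  | succ s ih =>
    obtain ⟨S, hS, htop⟩ := ih (Nat.le_of_succ_le hs)
    have hne : Sᶜ.Nonempty := by rw [← card_pos, card_compl, hS]; omega
    obtain ⟨i₀, hi₀, hmax⟩ := exists_max_image Sᶜ f hne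
    rw [mem_compl] at hi₀
    refine ⟨insert i₀ S, by rw [card_insert_of_notMem hi₀, hS], fun i hi j hj => ?_⟩
    rw [mem_insert, not_or] at hj
    rcases mem_insert.1 hi with rfl | hi
    · exact hmax j (mem_compl.2 hj.2)
    · exact htop i hi j hj.2

lemma exists_card_eq_sum_min_eq {α : Type*} [Fintype α] [DecidableEq α] (f : α → ℝ) {s : ℕ}
    (hs : s < Fintype.card α) :
    ∃ S : Finset α, #S = s ∧ ∃ i₀ ∉ S,
      ∑ i, min (f i) (f i₀) = s * f i₀ + ∑ i ∈ univ \ S, f i := by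
  obtain ⟨S, hS, htop⟩ := exists_card_eq_forall_le f hs.le
  have hne : (univ \ S).Nonempty := by rw [← card_pos, card_univ_sdiff, hS]; omega
  obtain ⟨i₀, hi₀, hmax⟩ := exists_max_image (univ \ S) f hne
  have hi₀S : i₀ ∉ S := (mem_sdiff.1 hi₀).2
  refine ⟨S, hS, i₀, hi₀S, ?_⟩
  rw [← sum_sdiff (subset_univ S), add_comm,
    sum_congr rfl fun i hi => min_eq_right (htop i hi i₀ hi₀S),
    sum_congr rfl fun i hi => min_eq_left (hmax i hi), sum_const, hS, nsmul_eq_mul]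

/-- main structural result for low-rank matrices and sparse masks.
If `W ∈ {0,1}^{n×p}` has at most `t` zeros per column and `L` has rank at most `k`, then
deleting at most `tk/ε` rows, the mass of `L` outside the support of `W` is at most an
`ε/(1−ε)` fraction of its mass on the support of `W`. -/
theorem stmt16
    {n p t k : ℕ}
    (W : Matrix (Fin n) (Fin p) ℝ)
    (hWbin : ∀ i j, W i j = 0 ∨ W i j = 1)
    (hWcol : ∀ j, (Finset.univ.filter fun i => W i j = 0).card ≤ t)
    (L : Matrix (Fin n) (Fin p) ℝ) (hL_rank : L.rank ≤ k)
    (ε : ℝ) (hε : 0 < ε) (hε1 : ε < 1) :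
    ∃ S : Finset (Fin n), (S.card : ℝ) ≤ (t : ℝ) * (k : ℝ) / ε ∧
      ∑ i ∈ Finset.univ \ S, ∑ j, (L i j * (1 - W i j)) ^ 2 ≤
        ε / (1 - ε) * ∑ i, ∑ j, (L i j * W i j) ^ 2 := by
  set ρ : Fin n → ℝ := fun i => ∑ j, (L i j * (1 - W i j)) ^ 2
  set s := ⌊(t : ℝ) * k / ε⌋₊
  have hsy : (s : ℝ) ≤ t * k / ε := Nat.floor_le (by positivity)
  rcases le_or_gt n s with hns | hsn
  · refine ⟨univ, by simpa using (Nat.cast_le.2 hns).trans hsy, ?_⟩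
    rw [sdiff_self, bot_eq_empty, sum_empty]
    positivity
  obtain ⟨S, hS, i₀, -, hsum⟩ := exists_card_eq_sum_min_eq ρ (s := s) (by simpa using hsn)
  refine ⟨S, hS ▸ hsy, ?_⟩
  have key := sq_sum_min_le_rank_mul L W hWbin hWcol (c := ρ i₀) (by positivity)
  rw [hsum] at key
  have hqs : (t : ℝ) * k ≤ s := by
    exact_mod_cast Nat.le_floor (by push_cast; exact le_div_self (by positivity) hε hε1.le)
  have hqε : (t : ℝ) * k ≤ 2 * ε * s := by
    simpa only [Nat.cast_mul] using le_two_mul_mul_floor_div (t * k) hε hε1.le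
  have hrank : (L.rank : ℝ) ≤ k := by exact_mod_cast hL_rank
  refine le_div_one_sub_mul_of_sq_le hε hε1 (by positivity) hqs hqε
    (by positivity) (by positivity) (by positivity) (key.trans ?_)
  calc _ ≤ (k : ℝ) * t * ρ i₀ * _ := by gcongr
    _ = _ := by ring
end

section
/- Bounded low-rank factors: Let M ∈ ℝ^{n×p} with |M(i,j)| ≤ Δ for all i, j, for some Δ > 0, and let L minimize ‖M − L̂‖_F over all matrices L̂ ∈ ℝ^{n×p} of rank at most k. Then L can be written as L = U·Vᵀ for some U ∈ ℝ^{n×k} and V ∈ ℝ^{p×k} such that every entry of U and every entry of V is bounded in magnitude by n^{1/4}·Δ^{1/2}. -/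
/-!
Rescaling a single column of `L` keeps its rank at most `k`, so by optimality each column
`L_j` is the best multiple of itself approximating `M_j`. Hence `M_j - L_j ⟂ L_j`, and by
Pythagoras `‖L_j‖ ≤ ‖M_j‖ ≤ √n Δ`. Expanding the columns of `L` in an orthonormal basis
`g_1, …, g_r` (`r ≤ k`) of its column space gives `L = G Bᵀ` with `|G_il| ≤ 1` and
`|B_jl| = |⟪g_l, L_j⟫| ≤ √n Δ`; the balanced factors `U = c G`, `V = B / c` with
`c = n^{1/4} Δ^{1/2}` satisfy both bounds.
-/

open Matrix BigOperators

open scoped InnerProductSpace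

section InnerProduct

variable {E : Type*} [NormedAddCommGroup E] [InnerProductSpace ℝ E]

theorem inner_sub_self_eq_zero_of_forall_norm_sub_le {x y : E}
    (h : ∀ t : ℝ, ‖x - y‖ ≤ ‖x - t • y‖) : ⟪x - y, y⟫_ℝ = 0 := by
  rcases eq_or_ne y 0 with rfl | hy
  · simp
  set w := ⟪x - y, y⟫_ℝ
  have hquad : ∀ s : ℝ, 2 * s * w ≤ s ^ 2 * ‖y‖ ^ 2 := by
    intro s
    have hs := pow_le_pow_left₀ (norm_nonneg _) (h (1 + s)) 2
    rw [show x - (1 + s) • y = (x - y) - s • y by module, norm_sub_sq_real (x - y) (s • y),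
      inner_smul_right, norm_smul, mul_pow, Real.norm_eq_abs, sq_abs] at hs
    linarith
  have hw : w ^ 2 ≤ 0 := by
    have := hquad (w / ‖y‖ ^ 2)
    field_simp at this
    nlinarith
  exact pow_eq_zero_iff two_ne_zero |>.mp (le_antisymm hw (sq_nonneg w))

theorem norm_le_of_forall_norm_sub_le {x y : E}
    (h : ∀ t : ℝ, ‖x - y‖ ≤ ‖x - t • y‖) : ‖y‖ ≤ ‖x‖ := by
  have hpyth := norm_add_sq_eq_norm_sq_add_norm_sq_real
    (inner_sub_self_eq_zero_of_forall_norm_sub_le h)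
  rw [sub_add_cancel] at hpyth
  exact (pow_le_pow_iff_left₀ (norm_nonneg _) (norm_nonneg _) two_ne_zero).mp
    (by nlinarith [sq_nonneg ‖x - y‖])

end InnerProduct

theorem exists_sum_inner_smul_eq_of_finrank_le {𝕜 E : Type*} [RCLike 𝕜] [NormedAddCommGroup E]
    [InnerProductSpace 𝕜 E] (K : Submodule 𝕜 E) [FiniteDimensional 𝕜 K] {k : ℕ}
    (hK : Module.finrank 𝕜 K ≤ k) :
    ∃ g : Fin k → E, (∀ l, ‖g l‖ ≤ 1) ∧ ∀ x ∈ K, ∑ l, ⟪g l, x⟫_𝕜 • g l = x := by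
  classical
  set b := stdOrthonormalBasis 𝕜 K
  set e := Fin.castLE hK
  have he : Function.Injective e := Fin.castLE_injective hK
  refine ⟨Function.extend e (fun l => (b l : E)) 0, fun l => ?_, fun x hx => ?_⟩
  · by_cases hl : ∃ l', e l' = l
    · obtain ⟨l', rfl⟩ := hl
      rw [he.extend_apply]
      exact (b.orthonormal.1 l').le
    · rw [Function.extend_apply' _ _ _ hl]
      simp
  · rw [← Fintype.sum_of_injective e he (fun l => ⟪(b l : E), x⟫_𝕜 • (b l : E))]
    · simpa [Submodule.coe_inner] using congrArg Subtype.val (b.sum_repr' ⟨x, hx⟩)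
    · intro l hl
      rw [Function.extend_apply' _ _ _ (by simpa using hl)]
      simp
    · intro l
      rw [he.extend_apply]

section Columns

variable {m p : Type*}

def euclideanCol (A : Matrix m p ℝ) (j : p) : EuclideanSpace ℝ m :=
  WithLp.toLp 2 (A.col j)

@[simp]
theorem euclideanCol_apply (A : Matrix m p ℝ) (j : p) (i : m) :
    euclideanCol A j i = A i j := rfl

theorem euclideanCol_sub (A B : Matrix m p ℝ) (j : p) :
    euclideanCol (A - B) j = euclideanCol A j - euclideanCol B j := rfl

theorem euclideanCol_sub_mul_diagonal [Fintype p] [DecidableEq p] (M L : Matrix m p ℝ)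
    (d : p → ℝ) (j : p) :
    euclideanCol (M - L * diagonal d) j = euclideanCol M j - d j • euclideanCol L j := by
  ext i
  simp [mul_comm]

theorem finrank_span_euclideanCol [Fintype m] [Fintype p] (L : Matrix m p ℝ) :
    Module.finrank ℝ (Submodule.span ℝ (Set.range (euclideanCol L))) = L.rank := by
  rw [rank_eq_finrank_span_cols,
    ← LinearEquiv.finrank_map_eq (WithLp.linearEquiv 2 ℝ (m → ℝ)).symm, Submodule.map_span,
    ← Set.range_comp]
  rfl

theorem norm_le_sqrt_card_mul_of_abs_le [Fintype m] {x : EuclideanSpace ℝ m} {Δ : ℝ}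
    (hΔ : 0 ≤ Δ) (hx : ∀ i, |x i| ≤ Δ) : ‖x‖ ≤ √(Fintype.card m) * Δ := by
  rw [EuclideanSpace.norm_eq, ← Real.sqrt_sq hΔ, ← Real.sqrt_mul (Nat.cast_nonneg _)]
  refine Real.sqrt_le_sqrt ?_
  calc ∑ i, ‖x i‖ ^ 2 ≤ ∑ _i : m, Δ ^ 2 := Finset.sum_le_sum fun i _ => by
        rw [Real.norm_eq_abs]
        exact pow_le_pow_left₀ (abs_nonneg _) (hx i) 2
    _ = Fintype.card m * Δ ^ 2 := by simp

theorem exists_mul_transpose_eq_of_norm_euclideanCol_le [Fintype m] [Fintype p] {k : ℕ}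
    (L : Matrix m p ℝ) (hL : L.rank ≤ k) {s t : ℝ} (hs : 0 ≤ s) (ht : 0 ≤ t)
    (hcol : ∀ j, ‖euclideanCol L j‖ ≤ s * t) :
    ∃ (U : Matrix m (Fin k) ℝ) (V : Matrix p (Fin k) ℝ),
      L = U * Vᵀ ∧ (∀ i l, |U i l| ≤ s) ∧ ∀ j l, |V j l| ≤ t := by
  rcases hs.eq_or_lt with rfl | hs
  · refine ⟨0, 0, ?_, by simp, fun _ _ => by simpa using ht⟩
    ext i j
    have hj : euclideanCol L j = 0 := norm_le_zero_iff.mp (by simpa using hcol j)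
    simpa using congrArg (· i) hj
  obtain ⟨g, hg_norm, hg_sum⟩ := exists_sum_inner_smul_eq_of_finrank_le
    (Submodule.span ℝ (Set.range (euclideanCol L))) ((finrank_span_euclideanCol L).trans_le hL)
  refine ⟨of fun i l => s * g l i, of fun j l => ⟪g l, euclideanCol L j⟫_ℝ / s, ?_, ?_, ?_⟩
  · ext i j
    have hLij := congrArg (· i) (hg_sum _ (Submodule.subset_span (Set.mem_range_self j)))
    simp only [WithLp.ofLp_sum, WithLp.ofLp_smul, Finset.sum_apply, Pi.smul_apply, smul_eq_mul,
      euclideanCol_apply] at hLij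
    rw [← hLij, mul_apply]
    refine Finset.sum_congr rfl fun l _ => ?_
    simp only [transpose_apply, of_apply]
    field_simp
  · intro i l
    rw [of_apply, abs_mul, abs_of_pos hs]
    exact mul_le_of_le_one_right hs.le ((PiLp.norm_apply_le _ _).trans (hg_norm l))
  · intro j l
    rw [of_apply, abs_div, abs_of_pos hs, div_le_iff₀' hs]
    calc |⟪g l, euclideanCol L j⟫_ℝ| ≤ ‖g l‖ * ‖euclideanCol L j‖ := abs_real_inner_le_norm _ _
      _ ≤ 1 * (s * t) := mul_le_mul (hg_norm l) (hcol j) (norm_nonneg _) zero_le_one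
      _ = s * t := one_mul _

end Columns

theorem frob2_eq_sum_norm_euclideanCol_sq {n p : ℕ} (A : Matrix (Fin n) (Fin p) ℝ) :
    frob2 A = ∑ j, ‖euclideanCol A j‖ ^ 2 := by
  simp only [frob2, EuclideanSpace.real_norm_sq_eq, euclideanCol_apply]
  exact Finset.sum_comm

theorem norm_euclideanCol_sub_le_of_forall_frob2_le {n p k : ℕ} {M L : Matrix (Fin n) (Fin p) ℝ}
    (hL_rank : L.rank ≤ k)
    (hL_opt : ∀ L' : Matrix (Fin n) (Fin p) ℝ, L'.rank ≤ k → frob2 (M - L) ≤ frob2 (M - L'))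
    (j : Fin p) (t : ℝ) :
    ‖euclideanCol M j - euclideanCol L j‖ ≤ ‖euclideanCol M j - t • euclideanCol L j‖ := by
  have hopt := hL_opt (L * diagonal (Function.update 1 j t))
    ((rank_mul_le_left _ _).trans hL_rank)
  rw [frob2_eq_sum_norm_euclideanCol_sq, frob2_eq_sum_norm_euclideanCol_sq, ← sub_nonneg,
    ← Finset.sum_sub_distrib, Finset.sum_eq_single j] at hopt
  · rw [euclideanCol_sub_mul_diagonal, Function.update_self, euclideanCol_sub, sub_nonneg] at hopt
    exact (pow_le_pow_iff_left₀ (norm_nonneg _) (norm_nonneg _) two_ne_zero).mp hopt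
  · intro j' _ hj'
    rw [euclideanCol_sub_mul_diagonal, Function.update_of_ne hj', Pi.one_apply, one_smul,
      euclideanCol_sub, sub_self]
  · simp

/-- bounded low-rank factors. If `|M(i,j)| ≤ Δ` and `L` is a best
rank-at-most-`k` Frobenius-norm approximation of `M`, then `L = U·Vᵀ` with all entries
of `U` and `V` bounded in magnitude by `n^{1/4}·Δ^{1/2}`. -/
theorem stmt19
    {n p k : ℕ}
    (Δ : ℝ) (hΔ : 0 < Δ)
    (M : Matrix (Fin n) (Fin p) ℝ) (hM : ∀ i j, |M i j| ≤ Δ)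
    (L : Matrix (Fin n) (Fin p) ℝ) (hL_rank : L.rank ≤ k)
    (hL_opt : ∀ L' : Matrix (Fin n) (Fin p) ℝ, L'.rank ≤ k →
      frob2 (M - L) ≤ frob2 (M - L')) :
    ∃ (U : Matrix (Fin n) (Fin k) ℝ) (V : Matrix (Fin p) (Fin k) ℝ),
      L = U * Vᵀ ∧
      (∀ i l, |U i l| ≤ (n : ℝ) ^ ((1 : ℝ) / 4) * Δ ^ ((1 : ℝ) / 2)) ∧
      (∀ j l, |V j l| ≤ (n : ℝ) ^ ((1 : ℝ) / 4) * Δ ^ ((1 : ℝ) / 2)) := by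
  set c := (n : ℝ) ^ ((1 : ℝ) / 4) * Δ ^ ((1 : ℝ) / 2)
  have hc : 0 ≤ c := by positivity
  have hcc : c * c = √n * Δ := by
    rw [show c * c = (n : ℝ) ^ ((1 : ℝ) / 4) * (n : ℝ) ^ ((1 : ℝ) / 4) *
        (Δ ^ ((1 : ℝ) / 2) * Δ ^ ((1 : ℝ) / 2)) by ring,
      ← Real.rpow_add' (Nat.cast_nonneg n) (by norm_num), ← Real.rpow_add' hΔ.le (by norm_num),
      Real.sqrt_eq_rpow]
    norm_num
  refine exists_mul_transpose_eq_of_norm_euclideanCol_le L hL_rank hc hc fun j => ?_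
  calc ‖euclideanCol L j‖ ≤ ‖euclideanCol M j‖ :=
        norm_le_of_forall_norm_sub_le (norm_euclideanCol_sub_le_of_forall_frob2_le hL_rank hL_opt j)
    _ ≤ √n * Δ := by simpa using norm_le_sqrt_card_mul_of_abs_le hΔ.le fun i => hM i j
    _ = c * c := hcc.symm
end
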